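/- arXiv:2108.09363 — 3 statements merged into one kernel-verified Lean document; each statement's English description precedes it below -/
import Mathlib

section
/- The number of spanning trees of the fan graph F_n (n ≥ 2) equals the Fibonacci number f_{2(n-1)}, where f_1 = f_2 = 1. -/
/-- The fan graph `F_n` on vertex set `Fin n`, where index `0` is the hub `v_∞`
and indices `1, …, n-1` correspond to the path vertices `v_2, …, v_n`. -/
def fanGraph (n : ℕ) : SimpleGraph (Fin n) :=
  SimpleGraph.fromRel (fun a b => (a : ℕ) = 0 ∨ ((a : ℕ) ≠ 0 ∧ (b : ℕ) = (a : ℕ) + 1))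

/-- The number of spanning trees of the fan graph `F_n`. -/
noncomputable def fanTreeCount (n : ℕ) : ℕ :=
  Nat.card {H : SimpleGraph (Fin n) // H ≤ fanGraph n ∧ H.IsTree}

open SimpleGraph

namespace FanProof

variable {n : ℕ}

/-- single-edge graph -/
abbrev eg {V : Type*} (a b : V) : SimpleGraph V := SimpleGraph.fromEdgeSet {s(a,b)}

/-- restriction to `Fin n` -/
abbrev pull (H : SimpleGraph (Fin (n+1))) : SimpleGraph (Fin n) :=
  SimpleGraph.comap Fin.castSucc H

lemma pull_adj (H : SimpleGraph (Fin (n+1))) (x y : Fin n) :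
    (pull H).Adj x y ↔ H.Adj x.castSucc y.castSucc := Iff.rfl

lemma reach_of_pull {H : SimpleGraph (Fin (n+1))} {x y : Fin n}
    (h : (pull H).Reachable x y) : H.Reachable x.castSucc y.castSucc :=
  h.map (⟨Fin.castSucc, fun a => a⟩ : pull H →g H)

lemma eg_self {V : Type*} (a : V) : eg a a = ⊥ := by
  ext x y
  simp only [fromEdgeSet_adj, Set.mem_singleton_iff, bot_adj, iff_false, not_and]
  intro h
  rw [Sym2.eq_iff] at h
  rcases h with ⟨rfl, rfl⟩ | ⟨rfl, rfl⟩ <;> simp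

lemma hub_join {M : SimpleGraph (Fin n)} {b₁ b₂ : Fin n} (hM : eg b₁ b₂ ≤ M)
    {x u : Fin n} (hx : x = b₁ ∨ x = b₂) (hu : u = b₁ ∨ u = b₂) :
    M.Reachable x u := by
  by_cases hxu : x = u
  · exact hxu ▸ Reachable.refl x
  · refine (hM ?_).reachable
    rw [fromEdgeSet_adj]
    refine ⟨?_, hxu⟩
    rcases hx with rfl | rfl <;> rcases hu with rfl | rfl <;>
      simp [Sym2.eq_swap] <;> exact absurd rfl hxu

lemma reach_down (H : SimpleGraph (Fin (n+1))) (b₁ b₂ : Fin n)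
    (hlast : ∀ z, H.Adj z (Fin.last n) → z = b₁.castSucc ∨ z = b₂.castSucc)
    {x y : Fin n} (h : H.Reachable x.castSucc y.castSucc) :
    (pull H ⊔ eg b₁ b₂).Reachable x y := by
  have key : ∀ (L : ℕ) (x y : Fin n) (w : H.Walk x.castSucc y.castSucc), w.length ≤ L →
      (pull H ⊔ eg b₁ b₂).Reachable x y := by
    intro L
    induction L with
    | zero =>
      intro x y w hw
      have hxy := Walk.eq_of_length_eq_zero (Nat.le_zero.mp hw)
      rw [Fin.castSucc_inj] at hxy
      exact hxy ▸ Reachable.refl x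
    | succ L ih =>
      intro x y w hw
      by_cases hxy : x = y
      · exact hxy ▸ Reachable.refl x
      · obtain ⟨z, h, hw', rfl⟩ :=
          Walk.exists_eq_cons_of_ne (fun hc => hxy (Fin.castSucc_inj.mp hc)) w
        rcases Fin.eq_castSucc_or_eq_last z with ⟨z', rfl⟩ | rfl
        · have hadj : (pull H ⊔ eg b₁ b₂).Adj x z' := Or.inl h
          refine hadj.reachable.trans (ih z' y hw' ?_)
          simp only [Walk.length_cons] at hw
          omega
        · have hx : x = b₁ ∨ x = b₂ := by
            rcases hlast _ h with h' | h' <;> [left; right] <;>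
              exact Fin.castSucc_injective _ h'
          obtain ⟨z₂, h₂, w₂, rfl⟩ :=
            Walk.exists_eq_cons_of_ne (Fin.castSucc_lt_last y).ne' hw'
          have hz₂ : z₂ = b₁.castSucc ∨ z₂ = b₂.castSucc := hlast _ h₂.symm
          simp only [Walk.length_cons] at hw
          rcases hz₂ with rfl | rfl
          · exact (hub_join le_sup_right hx (Or.inl rfl)).trans (ih b₁ y w₂ (by omega))
          · exact (hub_join le_sup_right hx (Or.inr rfl)).trans (ih b₂ y w₂ (by omega))
  obtain ⟨w⟩ := h
  exact key w.length x y w le_rfl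

lemma reach_up (H : SimpleGraph (Fin (n+1))) (b₁ b₂ : Fin n)
    (h₁ : H.Adj b₁.castSucc (Fin.last n)) (h₂ : H.Adj b₂.castSucc (Fin.last n))
    {x y : Fin n} (h : (pull H ⊔ eg b₁ b₂).Reachable x y) :
    H.Reachable x.castSucc y.castSucc := by
  obtain ⟨w⟩ := h
  induction w with
  | nil => exact Reachable.refl _
  | @cons u z _ ha _ ih =>
    rcases ha with ha | ha
    · exact (Adj.reachable (show H.Adj u.castSucc z.castSucc from ha)).trans ih
    · rw [fromEdgeSet_adj, Set.mem_singleton_iff, Sym2.eq_iff] at ha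
      rcases ha.1 with ⟨rfl, rfl⟩ | ⟨rfl, rfl⟩
      · exact (h₁.reachable.trans h₂.symm.reachable).trans ih
      · exact (h₂.reachable.trans h₁.symm.reachable).trans ih

lemma pull_sdiff (A B : SimpleGraph (Fin (n+1))) : pull (A \ B) = pull A \ pull B := rfl

lemma pull_eg_castSucc (a b : Fin n) : pull (eg a.castSucc b.castSucc) = eg a b := by
  ext x y
  simp only [comap_adj, fromEdgeSet_adj, Set.mem_singleton_iff, Sym2.eq_iff, Fin.castSucc_inj,
    ne_eq]

lemma pull_eg_last (z : Fin (n+1)) : pull (eg z (Fin.last n)) = ⊥ := by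
  ext x y
  simp only [comap_adj, fromEdgeSet_adj, Set.mem_singleton_iff, Sym2.eq_iff, bot_adj, iff_false,
    not_and, ne_eq]
  intro h
  exfalso
  rcases h with ⟨_, h⟩ | ⟨h, _⟩ <;> exact (Fin.castSucc_lt_last _).ne h

lemma not_reach_of_sup_acyclic {K : SimpleGraph (Fin n)} {a b : Fin n} (hab : a ≠ b)
    (hac : (K ⊔ eg a b).IsAcyclic) (hK : ¬ K.Adj a b) : ¬ K.Reachable a b := by
  intro hr
  obtain ⟨w⟩ := hr
  have he : (K ⊔ eg a b).Adj a b := by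
    refine Or.inr ?_
    rw [fromEdgeSet_adj]
    exact ⟨rfl, hab⟩
  let p : (K ⊔ eg a b).Path a b :=
    ⟨(w.toPath : K.Walk a b).mapLe le_sup_left, by
      rw [Walk.mapLe_isPath]
      exact w.toPath.2⟩
  have := hac.path_unique p (Path.singleton he)
  apply hK
  have hedges : s(a,b) ∈ (p : (K ⊔ eg a b).Walk a b).edges := by
    rw [this]
    simp [Path.singleton, Walk.edges_cons]
  have : s(a,b) ∈ (w.toPath : K.Walk a b).edges := by
    simpa [p, Walk.edges_mapLe_eq_edges] using hedges
  exact Walk.adj_of_mem_edges _ this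

lemma no_reach_last {H' : SimpleGraph (Fin (n+1))} (h : ∀ z, ¬ H'.Adj z (Fin.last n))
    {v : Fin (n+1)} (hv : v ≠ Fin.last n) : ¬ H'.Reachable v (Fin.last n) := by
  intro hr
  obtain ⟨w⟩ := hr.symm
  obtain ⟨z, hz, -, -⟩ := Walk.exists_eq_cons_of_ne (Ne.symm hv) w
  exact h z hz.symm

lemma reach_down_leaf (H : SimpleGraph (Fin (n+1))) (b : Fin n)
    (hlast : ∀ z, H.Adj z (Fin.last n) → z = b.castSucc)
    {x y : Fin n} (h : H.Reachable x.castSucc y.castSucc) : (pull H).Reachable x y := by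
  have := reach_down H b b (fun z hz => Or.inl (hlast z hz)) h
  rwa [eg_self, sup_bot_eq] at this

theorem leaf_iff (H : SimpleGraph (Fin (n+1))) (b : Fin n)
    (hlast : ∀ z, H.Adj z (Fin.last n) ↔ z = b.castSucc) :
    H.IsTree ↔ (pull H).IsTree := by
  have hAdj : H.Adj b.castSucc (Fin.last n) := (hlast _).mpr rfl
  have hdown : ∀ z, H.Adj z (Fin.last n) → z = b.castSucc := fun z hz => (hlast z).mp hz
  constructor
  · rintro ⟨hc, ha⟩
    constructor
    · rw [connected_iff]
      exact ⟨fun x y => reach_down_leaf H b hdown (hc.preconnected _ _), ⟨b⟩⟩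
    · rw [isAcyclic_iff_forall_adj_isBridge]
      intro x y hxy
      have hH : H.Adj x.castSucc y.castSucc := hxy
      have hb := (isAcyclic_iff_forall_adj_isBridge.mp ha) hH
      rw [isBridge_iff] at hb ⊢
      refine fun hr => hb ?_
      have hre : (pull (H \ eg x.castSucc y.castSucc)).Reachable x y := by
        rw [pull_sdiff, pull_eg_castSucc]
        exact hr
      exact reach_of_pull hre
  · rintro ⟨hc, ha⟩
    have key : ∀ v : Fin (n+1), H.Reachable v b.castSucc := by
      intro v
      rcases Fin.eq_castSucc_or_eq_last v with ⟨v', rfl⟩ | rfl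
      · exact reach_of_pull (hc.preconnected v' b)
      · exact hAdj.symm.reachable
    constructor
    · rw [connected_iff]
      exact ⟨fun v w => (key v).trans (key w).symm, ⟨Fin.last n⟩⟩
    · rw [isAcyclic_iff_forall_adj_isBridge]
      have lastBridge : ∀ z, H.Adj z (Fin.last n) → H.IsBridge s(z, Fin.last n) := by
        intro z hz
        rw [isBridge_iff]
        refine no_reach_last ?_ ?_
        · intro z' hz'
          rw [deleteEdges, sdiff_adj] at hz'
          obtain rfl := hdown z hz
          obtain rfl := hdown z' hz'.1
          exact hz'.2 (by rw [fromEdgeSet_adj]; exact ⟨rfl, hz.ne⟩)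
        · exact hz.ne
      intro v w hvw
      rcases Fin.eq_castSucc_or_eq_last w with ⟨w', rfl⟩ | rfl
      · rcases Fin.eq_castSucc_or_eq_last v with ⟨v', rfl⟩ | rfl
        · -- both castSucc
          have hK : (pull H).Adj v' w' := hvw
          have hbk := (isAcyclic_iff_forall_adj_isBridge.mp ha) hK
          rw [isBridge_iff] at hbk ⊢
          refine fun hr => hbk ?_
          have hd : ∀ z, (H \ eg v'.castSucc w'.castSucc).Adj z (Fin.last n) → z = b.castSucc :=
            fun z hz => hdown z hz.1
          have := reach_down_leaf _ b hd hr
          rwa [pull_sdiff, pull_eg_castSucc] at this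
        · rw [Sym2.eq_swap]
          exact lastBridge _ hvw.symm
      · exact lastBridge _ hvw

lemma sdiff_eg_eq_self {V : Type*} {K : SimpleGraph V} {a b : V} (h : ¬K.Adj a b) :
    K \ eg a b = K := by
  ext u v
  simp only [sdiff_adj, fromEdgeSet_adj, Set.mem_singleton_iff, ne_eq, and_iff_left_iff_imp]
  intro huv hc
  rcases Sym2.eq_iff.mp hc.1 with ⟨rfl, rfl⟩ | ⟨rfl, rfl⟩
  · exact h huv
  · exact h huv.symm

lemma sup_eg_sdiff {V : Type*} (K : SimpleGraph V) (a b x y : V) (hne : s(a,b) ≠ s(x,y)) :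
    (K ⊔ eg a b) \ eg x y = (K \ eg x y) ⊔ eg a b := by
  ext u v
  simp only [sdiff_adj, sup_adj, fromEdgeSet_adj, Set.mem_singleton_iff, ne_eq]
  constructor
  · rintro ⟨hK | ⟨he, hne'⟩, hn⟩
    · exact Or.inl ⟨hK, hn⟩
    · exact Or.inr ⟨he, hne'⟩
  · rintro (⟨hK, hn⟩ | ⟨he, hne'⟩)
    · exact ⟨Or.inl hK, hn⟩
    · refine ⟨Or.inr ⟨he, hne'⟩, fun hc => hne ?_⟩
      rw [← he, hc.1]

lemma bridge_last_deg2 (H : SimpleGraph (Fin (n+1))) (c d : Fin n)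
    (hlast : ∀ z, H.Adj z (Fin.last n) ↔ (z = c.castSucc ∨ z = d.castSucc))
    (hnr : ¬ (pull H).Reachable c d) : H.IsBridge s(c.castSucc, Fin.last n) := by
  rw [isBridge_iff]
  have hadj : H.Adj c.castSucc (Fin.last n) := (hlast _).mpr (Or.inl rfl)
  refine fun hr => ?_
  set H' := H \ eg c.castSucc (Fin.last n) with hH'
  have hd' : ∀ z, H'.Adj z (Fin.last n) → z = d.castSucc := by
    intro z hz
    rcases (hlast z).mp hz.1 with rfl | rfl
    · exact absurd (by rw [fromEdgeSet_adj]; exact ⟨rfl, hadj.ne⟩) hz.2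
    · rfl
  obtain ⟨w⟩ := hr.symm
  obtain ⟨z₂, hz₂, w₂, rfl⟩ :=
    Walk.exists_eq_cons_of_ne (Fin.castSucc_lt_last c).ne' w
  obtain rfl := hd' z₂ hz₂.symm
  have hres := reach_down_leaf H' d hd' (⟨w₂⟩ : H'.Reachable d.castSucc c.castSucc)
  rw [hH', pull_sdiff, pull_eg_last, sdiff_bot] at hres
  exact hnr hres.symm

theorem deg2_iff (H : SimpleGraph (Fin (n+1))) (b₁ b₂ : Fin n) (hb : b₁ ≠ b₂)
    (hlast : ∀ z, H.Adj z (Fin.last n) ↔ (z = b₁.castSucc ∨ z = b₂.castSucc)) :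
    H.IsTree ↔ ((pull H ⊔ eg b₁ b₂).IsTree ∧ ¬ (pull H).Adj b₁ b₂) := by
  have h₁ : H.Adj b₁.castSucc (Fin.last n) := (hlast _).mpr (Or.inl rfl)
  have h₂ : H.Adj b₂.castSucc (Fin.last n) := (hlast _).mpr (Or.inr rfl)
  have hdown : ∀ z, H.Adj z (Fin.last n) → z = b₁.castSucc ∨ z = b₂.castSucc :=
    fun z hz => (hlast z).mp hz
  constructor
  · rintro ⟨hc, ha⟩
    have hnK : ¬ (pull H).Adj b₁ b₂ := by
      intro hk
      have hkH : H.Adj b₁.castSucc b₂.castSucc := hk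
      have hp2 : (Walk.cons h₁ (Walk.cons h₂.symm Walk.nil) :
          H.Walk b₁.castSucc b₂.castSucc).IsPath := by
        rw [Walk.isPath_def]
        simp only [Walk.support_cons, Walk.support_nil, List.nodup_cons, List.mem_cons,
          List.mem_singleton, List.not_mem_nil, or_false, not_or, List.nodup_nil, and_true]
        exact ⟨⟨(Fin.castSucc_lt_last _).ne, fun hc' => hb (Fin.castSucc_injective _ hc')⟩,
          (Fin.castSucc_lt_last _).ne', not_false⟩
      have hequ := ha.path_unique (Path.singleton hkH) ⟨_, hp2⟩
      have hlen := congrArg (fun p : H.Path b₁.castSucc b₂.castSucc => p.val.length) hequ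
      simp [Path.singleton] at hlen
    refine ⟨⟨?_, ?_⟩, hnK⟩
    · rw [connected_iff]
      exact ⟨fun x y => reach_down H b₁ b₂ hdown (hc.preconnected _ _), ⟨b₁⟩⟩
    · rw [isAcyclic_iff_forall_adj_isBridge]
      intro x y hxy
      rcases hxy with hK | hE
      · -- edge of K
        have hH : H.Adj x.castSucc y.castSucc := hK
        have hbH := (isAcyclic_iff_forall_adj_isBridge.mp ha) hH
        rw [isBridge_iff] at hbH ⊢
        refine fun hr => hbH ?_
        have hne : s(b₁,b₂) ≠ s(x,y) := by
          intro hc'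
          rcases Sym2.eq_iff.mp hc' with ⟨rfl, rfl⟩ | ⟨rfl, rfl⟩
          · exact hnK hK
          · exact hnK hK.symm
        rw [deleteEdges, sup_eg_sdiff _ _ _ _ _ hne] at hr
        have hpull : pull (H \ eg x.castSucc y.castSucc) = pull H \ eg x y := by
          rw [pull_sdiff, pull_eg_castSucc]
        have h₁' : (H \ eg x.castSucc y.castSucc).Adj b₁.castSucc (Fin.last n) := by
          refine ⟨h₁, fun hc' => ?_⟩
          rcases Sym2.eq_iff.mp hc'.1 with ⟨_, h'⟩ | ⟨_, h'⟩ <;>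
            exact (Fin.castSucc_lt_last _).ne' h'
        have h₂' : (H \ eg x.castSucc y.castSucc).Adj b₂.castSucc (Fin.last n) := by
          refine ⟨h₂, fun hc' => ?_⟩
          rcases Sym2.eq_iff.mp hc'.1 with ⟨_, h'⟩ | ⟨_, h'⟩ <;>
            exact (Fin.castSucc_lt_last _).ne' h'
        refine reach_up _ b₁ b₂ h₁' h₂' ?_
        rw [hpull]
        exact hr
      · -- the new edge
        rw [fromEdgeSet_adj, Set.mem_singleton_iff] at hE
        rw [hE.1]
        rw [isBridge_iff]
        have hMadj : (pull H ⊔ eg b₁ b₂).Adj b₁ b₂ := by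
          refine Or.inr ?_
          rw [fromEdgeSet_adj]
          exact ⟨rfl, hb⟩
        refine fun hr => ?_
        have hMsd : (pull H ⊔ eg b₁ b₂) \ eg b₁ b₂ = pull H := by
          have : (pull H ⊔ eg b₁ b₂) \ eg b₁ b₂ = pull H \ eg b₁ b₂ := by
            ext u v
            simp only [sdiff_adj, sup_adj]
            tauto
          rw [this, sdiff_eg_eq_self hnK]
        rw [deleteEdges, hMsd] at hr
        -- hr : (pull H).Reachable b₁ b₂ ; contradict bridge of s(cb₁, last) in H
        have hbr := (isAcyclic_iff_forall_adj_isBridge.mp ha) h₁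
        rw [isBridge_iff] at hbr
        apply hbr
        have hpull : pull (H \ eg b₁.castSucc (Fin.last n)) = pull H := by
          rw [pull_sdiff, pull_eg_last, sdiff_bot]
        have hr' : (H \ eg b₁.castSucc (Fin.last n)).Reachable b₁.castSucc b₂.castSucc := by
          refine reach_of_pull ?_
          rw [hpull]
          exact hr
        have h₂' : (H \ eg b₁.castSucc (Fin.last n)).Adj b₂.castSucc (Fin.last n) := by
          refine ⟨h₂, fun hc' => ?_⟩
          rcases Sym2.eq_iff.mp hc'.1 with ⟨h', _⟩ | ⟨h', _⟩
          · exact hb (Fin.castSucc_injective _ h').symm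
          · exact (Fin.castSucc_lt_last _).ne h'
        exact hr'.trans h₂'.reachable
  · rintro ⟨⟨hcM, haM⟩, hnK⟩
    have hnr : ¬ (pull H).Reachable b₁ b₂ := not_reach_of_sup_acyclic hb haM hnK
    have key : ∀ v : Fin (n+1), H.Reachable v b₁.castSucc := by
      intro v
      rcases Fin.eq_castSucc_or_eq_last v with ⟨v', rfl⟩ | rfl
      · exact reach_up H b₁ b₂ h₁ h₂ (hcM.preconnected v' b₁)
      · exact h₁.symm.reachable
    constructor
    · rw [connected_iff]
      exact ⟨fun v w => (key v).trans (key w).symm, ⟨Fin.last n⟩⟩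
    · rw [isAcyclic_iff_forall_adj_isBridge]
      have lastBridge : ∀ z, H.Adj z (Fin.last n) → H.IsBridge s(z, Fin.last n) := by
        intro z hz
        rcases hdown z hz with rfl | rfl
        · exact bridge_last_deg2 H b₁ b₂ hlast hnr
        · refine bridge_last_deg2 H b₂ b₁ (fun z' => ?_) (fun h => hnr h.symm)
          rw [hlast z', or_comm]
      intro v w hvw
      rcases Fin.eq_castSucc_or_eq_last w with ⟨w', rfl⟩ | rfl
      · rcases Fin.eq_castSucc_or_eq_last v with ⟨v', rfl⟩ | rfl
        · -- K edge
          have hK : (pull H).Adj v' w' := hvw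
          have hbM := (isAcyclic_iff_forall_adj_isBridge.mp haM) (Or.inl hK :
            (pull H ⊔ eg b₁ b₂).Adj v' w')
          rw [isBridge_iff] at hbM ⊢
          refine fun hr => hbM ?_
          have hne : s(b₁,b₂) ≠ s(v',w') := by
            intro hc'
            rcases Sym2.eq_iff.mp hc' with ⟨rfl, rfl⟩ | ⟨rfl, rfl⟩
            · exact hnK hK
            · exact hnK hK.symm
          have hd : ∀ z, (H \ eg v'.castSucc w'.castSucc).Adj z (Fin.last n) →
              z = b₁.castSucc ∨ z = b₂.castSucc := fun z hz => hdown z hz.1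
          have := reach_down _ b₁ b₂ hd hr
          rw [pull_sdiff, pull_eg_castSucc, ← sup_eg_sdiff _ _ _ _ _ hne] at this
          exact this
        · rw [Sym2.eq_swap]
          exact lastBridge _ hvw.symm
      · exact lastBridge _ hvw


def fanG (n : ℕ) : SimpleGraph (Fin n) :=
  SimpleGraph.fromRel (fun a b => (a : ℕ) = 0 ∨ ((a : ℕ) ≠ 0 ∧ (b : ℕ) = (a : ℕ) + 1))

lemma pull_fan (m : ℕ) : pull (fanG (m+1)) = fanG m := by
  ext x y
  simp only [comap_adj, fanG, fromRel_adj, ne_eq, Fin.castSucc_inj, Fin.coe_castSucc]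

lemma fan_last_adj (m : ℕ) (z : Fin (m+3)) :
    (fanG (m+3)).Adj z (Fin.last (m+2)) ↔ (z = 0 ∨ z = (Fin.last (m+1)).castSucc) := by
  have hlt := z.isLt
  simp only [fanG, fromRel_adj, ne_eq, Fin.ext_iff, Fin.val_last, Fin.coe_castSucc,
    Fin.val_zero]
  omega

lemma eg_le {V : Type*} {G : SimpleGraph V} {a b : V} (h : G.Adj a b) : eg a b ≤ G := by
  intro x y hxy
  rw [fromEdgeSet_adj, Set.mem_singleton_iff] at hxy
  rcases Sym2.eq_iff.mp hxy.1 with ⟨rfl, rfl⟩ | ⟨rfl, rfl⟩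
  · exact h
  · exact h.symm

variable {m : ℕ}

/-- possible extra edges at the last vertex -/
def Epat (m : ℕ) (s p : Bool) : SimpleGraph (Fin (m+3)) :=
  (if s then eg 0 (Fin.last (m+2)) else ⊥) ⊔
    (if p then eg ((Fin.last (m+1)).castSucc) (Fin.last (m+2)) else ⊥)

lemma prev_ne_zero : ((Fin.last (m+1)).castSucc : Fin (m+3)) ≠ 0 := by
  simp [Fin.ext_iff]

lemma zero_ne_last : (0 : Fin (m+3)) ≠ Fin.last (m+2) := by
  simp [Fin.ext_iff]

lemma Epat_le_fan (s p : Bool) : Epat m s p ≤ fanG (m+3) := by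
  apply sup_le <;> split
  · exact eg_le ((fan_last_adj m 0).mpr (Or.inl rfl))
  · exact bot_le
  · exact eg_le ((fan_last_adj m _).mpr (Or.inr rfl))
  · exact bot_le

lemma Epat_adj_zero (s p : Bool) :
    (Epat m s p).Adj 0 (Fin.last (m+2)) ↔ s = true := by
  cases s <;> cases p <;>
    simp [Epat, fromEdgeSet_adj, Sym2.eq_iff, zero_ne_last, eq_comm,
      prev_ne_zero, (Fin.castSucc_lt_last (Fin.last (m+1))).ne, Fin.ext_iff]

lemma Epat_adj_prev (s p : Bool) :
    (Epat m s p).Adj ((Fin.last (m+1)).castSucc) (Fin.last (m+2)) ↔ p = true := by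
  cases s <;> cases p <;>
    simp [Epat, fromEdgeSet_adj, Sym2.eq_iff, zero_ne_last, eq_comm,
      prev_ne_zero, (Fin.castSucc_lt_last (Fin.last (m+1))).ne, Fin.ext_iff]

lemma Epat_adj_cs (s p : Bool) (x y : Fin (m+2)) :
    ¬ (Epat m s p).Adj x.castSucc y.castSucc := by
  intro h
  rcases h with h | h <;> revert h <;> split <;>
    simp only [bot_adj, fromEdgeSet_adj, Set.mem_singleton_iff, Sym2.eq_iff, Fin.ext_iff,
      Fin.coe_castSucc, Fin.val_last, Fin.val_zero, imp_self] <;> omega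

lemma pull_Epat (s p : Bool) : pull (Epat m s p) = ⊥ := by
  ext x y
  simp only [comap_adj, bot_adj, iff_false]
  exact Epat_adj_cs s p x y

abbrev push (K : SimpleGraph (Fin (m+2))) : SimpleGraph (Fin (m+3)) :=
  K.map Fin.castSuccEmb

lemma pull_push (K : SimpleGraph (Fin (m+2))) : pull (push K) = K := by
  have := SimpleGraph.comap_map_eq (Fin.castSuccEmb) K
  rwa [Fin.coe_castSuccEmb] at this

lemma push_le_fan {K : SimpleGraph (Fin (m+2))} (h : K ≤ fanG (m+2)) :
    push K ≤ fanG (m+3) := by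
  rw [SimpleGraph.map_le_iff_le_comap]
  have : SimpleGraph.comap (⇑Fin.castSuccEmb) (fanG (m+3)) = fanG (m+2) := by
    rw [Fin.coe_castSuccEmb]; exact pull_fan (m+2)
  rw [this]; exact h

lemma push_adj_cs (K : SimpleGraph (Fin (m+2))) (x y : Fin (m+2)) :
    (push K).Adj x.castSucc y.castSucc ↔ K.Adj x y := by
  rw [SimpleGraph.map_adj]
  constructor
  · rintro ⟨u, v, h, hu, hv⟩
    obtain rfl : u = x := Fin.castSucc_injective _ hu
    obtain rfl : v = y := Fin.castSucc_injective _ hv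
    exact h
  · intro h
    exact ⟨x, y, h, rfl, rfl⟩

lemma push_not_adj_last (K : SimpleGraph (Fin (m+2))) (z : Fin (m+3)) :
    ¬ (push K).Adj z (Fin.last (m+2)) := by
  rintro ⟨u, v, h, hu, hv⟩
  exact (Fin.castSucc_lt_last h).ne hv.2

lemma decompose (H : SimpleGraph (Fin (m+3))) (hf : H ≤ fanG (m+3)) (s p : Bool)
    (hs : H.Adj 0 (Fin.last (m+2)) ↔ s = true)
    (hp : H.Adj ((Fin.last (m+1)).castSucc) (Fin.last (m+2)) ↔ p = true) :
    H = push (pull H) ⊔ Epat m s p := by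
  have aux : ∀ z, H.Adj z (Fin.last (m+2)) ↔ (Epat m s p).Adj z (Fin.last (m+2)) := by
    intro z
    constructor
    · intro h
      rcases (fan_last_adj m z).mp (hf h) with rfl | rfl
      · cases s
        · exact absurd (hs.mp h) (by simp)
        · rcases (Epat_adj_zero true p) with ⟨_, h2⟩
          exact h2 rfl
      · cases p
        · exact absurd (hp.mp h) (by simp)
        · exact (Epat_adj_prev s true).mpr rfl
    · intro h
      have hle := Epat_le_fan (m := m) s p
      rcases (fan_last_adj m z).mp (hle h) with rfl | rfl
      · exact hs.mpr ((Epat_adj_zero s p).mp h)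
      · exact hp.mpr ((Epat_adj_prev s p).mp h)
  ext v w
  rcases Fin.eq_castSucc_or_eq_last w with ⟨w', rfl⟩ | rfl
  · rcases Fin.eq_castSucc_or_eq_last v with ⟨v', rfl⟩ | rfl
    · rw [sup_adj, push_adj_cs]
      constructor
      · intro h; exact Or.inl h
      · rintro (h | h)
        · exact h
        · exact absurd h (Epat_adj_cs s p v' w')
    · constructor
      · intro h
        have := (aux _).mp h.symm
        exact Or.inr this.symm
      · rintro (h | h)
        · exact absurd h.symm (push_not_adj_last _ _)
        · exact ((aux _).mpr h.symm).symm
  · rw [sup_adj]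
    constructor
    · intro h
      exact Or.inr ((aux v).mp h)
    · rintro (h | h)
      · exact absurd h (push_not_adj_last _ _)
      · exact (aux v).mpr h

noncomputable def patternEquiv (s p : Bool) (Q : SimpleGraph (Fin (m+2)) → Prop) :
    {H : SimpleGraph (Fin (m+3)) // H ≤ fanG (m+3) ∧ (H.Adj 0 (Fin.last (m+2)) ↔ s = true) ∧
      (H.Adj ((Fin.last (m+1)).castSucc) (Fin.last (m+2)) ↔ p = true) ∧ Q (pull H)} ≃
    {K : SimpleGraph (Fin (m+2)) // K ≤ fanG (m+2) ∧ Q K} where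
  toFun H := ⟨pull H.1, by
    rw [← pull_fan (m+2)]
    exact fun a b h => H.2.1 h, H.2.2.2.2⟩
  invFun K := ⟨push K.1 ⊔ Epat m s p, by
    refine ⟨sup_le (push_le_fan K.2.1) (Epat_le_fan s p), ?_, ?_, ?_⟩
    · rw [sup_adj]
      constructor
      · rintro (h | h)
        · exact absurd h (push_not_adj_last _ _)
        · exact (Epat_adj_zero s p).mp h
      · intro h
        exact Or.inr ((Epat_adj_zero s p).mpr h)
    · rw [sup_adj]
      constructor
      · rintro (h | h)
        · exact absurd h (push_not_adj_last _ _)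
        · exact (Epat_adj_prev s p).mp h
      · intro h
        exact Or.inr ((Epat_adj_prev s p).mpr h)
    · have : pull (push K.1 ⊔ Epat m s p) = K.1 := by
        have hps : pull (push K.1 ⊔ Epat m s p) = pull (push K.1) ⊔ pull (Epat m s p) := rfl
        rw [hps, pull_push, pull_Epat, sup_bot_eq]
      rw [this]
      exact K.2.2⟩
  left_inv H := by
    apply Subtype.ext
    exact (decompose H.1 H.2.1 s p H.2.2.1 H.2.2.2.1).symm
  right_inv K := by
    apply Subtype.ext
    show pull (push K.1 ⊔ Epat m s p) = K.1
    have hps : pull (push K.1 ⊔ Epat m s p) = pull (push K.1) ⊔ pull (Epat m s p) := rfl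
    rw [hps, pull_push, pull_Epat, sup_bot_eq]

lemma card_split {α : Type*} [Finite α] (P Q : α → Prop) :
    Nat.card {x : α // P x} = Nat.card {x : α // P x ∧ Q x} +
      Nat.card {x : α // P x ∧ ¬ Q x} := by
  classical
  rw [← Nat.card_sum]
  apply Nat.card_congr
  exact (((Equiv.subtypeSubtypeEquivSubtypeInter P Q).symm).sumCongr
    ((Equiv.subtypeSubtypeEquivSubtypeInter P (fun x => ¬ Q x)).symm)).trans
    (Equiv.sumCompl _) |>.symm

/-- number of spanning trees -/
noncomputable def A (k : ℕ) : ℕ :=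
  Nat.card {H : SimpleGraph (Fin k) // H ≤ fanG k ∧ H.IsTree}

/-- number of 2-component spanning forests separating hub and last vertex -/
noncomputable def C (k : ℕ) : ℕ :=
  Nat.card {K : SimpleGraph (Fin (k+2)) // K ≤ fanG (k+2) ∧
    (¬ K.Adj 0 (Fin.last (k+1)) ∧ (K ⊔ eg 0 (Fin.last (k+1))).IsTree)}

lemma castSucc_zero' : ((0 : Fin (m+2)).castSucc : Fin (m+3)) = 0 := by
  simp [Fin.ext_iff]

lemma zero_ne_lastm : (0 : Fin (m+2)) ≠ Fin.last (m+1) := by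
  simp [Fin.ext_iff]

lemma A_rec (m : ℕ) : A (m+3) = A (m+2) + A (m+2) + C m := by
  classical
  set lst := Fin.last (m+2)
  set prv : Fin (m+3) := (Fin.last (m+1)).castSucc with hprv
  have h1 := card_split (fun H : SimpleGraph (Fin (m+3)) => H ≤ fanG (m+3) ∧ H.IsTree)
    (fun H => H.Adj 0 lst)
  have h2 := card_split (fun H : SimpleGraph (Fin (m+3)) =>
    (H ≤ fanG (m+3) ∧ H.IsTree) ∧ H.Adj 0 lst) (fun H => H.Adj prv lst)
  have h3 := card_split (fun H : SimpleGraph (Fin (m+3)) =>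
    (H ≤ fanG (m+3) ∧ H.IsTree) ∧ ¬ H.Adj 0 lst) (fun H => H.Adj prv lst)
  -- case (true, true) : C m
  have htt : Nat.card {H : SimpleGraph (Fin (m+3)) //
      ((H ≤ fanG (m+3) ∧ H.IsTree) ∧ H.Adj 0 lst) ∧ H.Adj prv lst} = C m := by
    rw [show C m = Nat.card {K : SimpleGraph (Fin (m+2)) // K ≤ fanG (m+2) ∧
      (¬ K.Adj 0 (Fin.last (m+1)) ∧ (K ⊔ eg 0 (Fin.last (m+1))).IsTree)} from rfl,
      ← Nat.card_congr (patternEquiv true true (fun K =>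
      ¬ K.Adj 0 (Fin.last (m+1)) ∧ (K ⊔ eg 0 (Fin.last (m+1))).IsTree))]
    apply Nat.card_congr
    apply Equiv.subtypeEquivRight
    intro H
    constructor
    · rintro ⟨⟨⟨hf, ht⟩, h0⟩, hp⟩
      have hlast : ∀ z, H.Adj z lst ↔
          (z = (0 : Fin (m+2)).castSucc ∨ z = (Fin.last (m+1)).castSucc) := by
        intro z
        rw [castSucc_zero']
        constructor
        · intro h; exact (fan_last_adj m z).mp (hf h)
        · rintro (rfl | rfl); exacts [h0, hp]
      rw [deg2_iff H 0 (Fin.last (m+1)) zero_ne_lastm hlast] at ht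
      exact ⟨hf, ⟨fun _ => rfl, fun _ => h0⟩, ⟨fun _ => rfl, fun _ => hp⟩, ht.2, ht.1⟩
    · rintro ⟨hf, hs, hp, hQ1, hQ2⟩
      have h0 := hs.mpr rfl
      have hpv := hp.mpr rfl
      have hlast : ∀ z, H.Adj z lst ↔
          (z = (0 : Fin (m+2)).castSucc ∨ z = (Fin.last (m+1)).castSucc) := by
        intro z
        rw [castSucc_zero']
        constructor
        · intro h; exact (fan_last_adj m z).mp (hf h)
        · rintro (rfl | rfl); exacts [h0, hpv]
      refine ⟨⟨⟨hf, ?_⟩, h0⟩, hpv⟩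
      rw [deg2_iff H 0 (Fin.last (m+1)) zero_ne_lastm hlast]
      exact ⟨hQ2, hQ1⟩
  -- case (true, false) : A (m+2)
  have htf : Nat.card {H : SimpleGraph (Fin (m+3)) //
      ((H ≤ fanG (m+3) ∧ H.IsTree) ∧ H.Adj 0 lst) ∧ ¬ H.Adj prv lst} = A (m+2) := by
    rw [show A (m+2) = Nat.card {K : SimpleGraph (Fin (m+2)) //
      K ≤ fanG (m+2) ∧ K.IsTree} from rfl,
      ← Nat.card_congr (patternEquiv true false (fun K => K.IsTree))]
    apply Nat.card_congr
    apply Equiv.subtypeEquivRight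
    intro H
    constructor
    · rintro ⟨⟨⟨hf, ht⟩, h0⟩, hp⟩
      have hlast : ∀ z, H.Adj z lst ↔ z = (0 : Fin (m+2)).castSucc := by
        intro z
        rw [castSucc_zero']
        constructor
        · intro h
          rcases (fan_last_adj m z).mp (hf h) with rfl | rfl
          · rfl
          · exact absurd h hp
        · rintro rfl; exact h0
      rw [leaf_iff H 0 hlast] at ht
      exact ⟨hf, ⟨fun _ => rfl, fun _ => h0⟩,
        ⟨fun h => absurd h hp, fun h => absurd h (by simp)⟩, ht⟩
    · rintro ⟨hf, hs, hp, hQ⟩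
      have h0 := hs.mpr rfl
      have hpv : ¬ H.Adj prv lst := fun h => by simpa using hp.mp h
      have hlast : ∀ z, H.Adj z lst ↔ z = (0 : Fin (m+2)).castSucc := by
        intro z
        rw [castSucc_zero']
        constructor
        · intro h
          rcases (fan_last_adj m z).mp (hf h) with rfl | rfl
          · rfl
          · exact absurd h hpv
        · rintro rfl; exact h0
      refine ⟨⟨⟨hf, ?_⟩, h0⟩, hpv⟩
      rw [leaf_iff H 0 hlast]
      exact hQ
  -- case (false, true) : A (m+2)
  have hft : Nat.card {H : SimpleGraph (Fin (m+3)) //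
      ((H ≤ fanG (m+3) ∧ H.IsTree) ∧ ¬ H.Adj 0 lst) ∧ H.Adj prv lst} = A (m+2) := by
    rw [show A (m+2) = Nat.card {K : SimpleGraph (Fin (m+2)) //
      K ≤ fanG (m+2) ∧ K.IsTree} from rfl,
      ← Nat.card_congr (patternEquiv false true (fun K => K.IsTree))]
    apply Nat.card_congr
    apply Equiv.subtypeEquivRight
    intro H
    constructor
    · rintro ⟨⟨⟨hf, ht⟩, h0⟩, hp⟩
      have hlast : ∀ z, H.Adj z lst ↔ z = (Fin.last (m+1)).castSucc := by
        intro z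
        constructor
        · intro h
          rcases (fan_last_adj m z).mp (hf h) with rfl | rfl
          · exact absurd h h0
          · rfl
        · rintro rfl; exact hp
      rw [leaf_iff H (Fin.last (m+1)) hlast] at ht
      exact ⟨hf, ⟨fun h => absurd h h0, fun h => absurd h (by simp)⟩,
        ⟨fun _ => rfl, fun _ => hp⟩, ht⟩
    · rintro ⟨hf, hs, hp, hQ⟩
      have hpv := hp.mpr rfl
      have h0 : ¬ H.Adj 0 lst := fun h => by simpa using hs.mp h
      have hlast : ∀ z, H.Adj z lst ↔ z = (Fin.last (m+1)).castSucc := by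
        intro z
        constructor
        · intro h
          rcases (fan_last_adj m z).mp (hf h) with rfl | rfl
          · exact absurd h h0
          · rfl
        · rintro rfl; exact hpv
      refine ⟨⟨⟨hf, ?_⟩, h0⟩, hpv⟩
      rw [leaf_iff H (Fin.last (m+1)) hlast]
      exact hQ
  -- case (false, false) : 0
  have hff : Nat.card {H : SimpleGraph (Fin (m+3)) //
      ((H ≤ fanG (m+3) ∧ H.IsTree) ∧ ¬ H.Adj 0 lst) ∧ ¬ H.Adj prv lst} = 0 := by
    rw [Nat.card_eq_zero]
    left
    constructor
    rintro ⟨H, ⟨⟨hf, ht⟩, h0⟩, hp⟩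
    have hr : H.Reachable lst 0 := ht.isConnected.preconnected lst 0
    obtain ⟨w⟩ := hr
    have hne : lst ≠ (0 : Fin (m+3)) := Ne.symm zero_ne_last
    obtain ⟨z, hz, -, -⟩ := Walk.exists_eq_cons_of_ne hne w
    rcases (fan_last_adj m z).mp (hf hz.symm) with rfl | rfl
    · exact h0 hz.symm
    · exact hp hz.symm
  rw [A, h1, h2, h3, htt, htf, hft, hff]
  omega

lemma C_rec (m : ℕ) : C (m+1) = A (m+2) + C m := by
  classical
  set lst := Fin.last (m+2)
  set prv : Fin (m+3) := (Fin.last (m+1)).castSucc with hprv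
  have hegfan : eg (0 : Fin (m+3)) lst ≤ fanG (m+3) :=
    eg_le ((fan_last_adj m 0).mpr (Or.inl rfl))
  have hpullM : ∀ H : SimpleGraph (Fin (m+3)),
      pull (H ⊔ eg (0 : Fin (m+3)) lst) = pull H := by
    intro H
    have : pull (H ⊔ eg (0 : Fin (m+3)) lst) = pull H ⊔ pull (eg (0 : Fin (m+3)) lst) := rfl
    rw [this, pull_eg_last, sup_bot_eq]
  have hegadj : (eg (0 : Fin (m+3)) lst).Adj 0 lst := by
    rw [fromEdgeSet_adj]
    exact ⟨rfl, zero_ne_last⟩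
  have h1 := card_split (fun H : SimpleGraph (Fin (m+3)) => H ≤ fanG (m+3) ∧
    (¬ H.Adj 0 lst ∧ (H ⊔ eg 0 lst).IsTree)) (fun H => H.Adj prv lst)
  -- case (false, true) : C m
  have hft : Nat.card {H : SimpleGraph (Fin (m+3)) //
      (H ≤ fanG (m+3) ∧ (¬ H.Adj 0 lst ∧ (H ⊔ eg 0 lst).IsTree)) ∧ H.Adj prv lst} = C m := by
    rw [show C m = Nat.card {K : SimpleGraph (Fin (m+2)) // K ≤ fanG (m+2) ∧
      (¬ K.Adj 0 (Fin.last (m+1)) ∧ (K ⊔ eg 0 (Fin.last (m+1))).IsTree)} from rfl,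
      ← Nat.card_congr (patternEquiv false true (fun K =>
      ¬ K.Adj 0 (Fin.last (m+1)) ∧ (K ⊔ eg 0 (Fin.last (m+1))).IsTree))]
    apply Nat.card_congr
    apply Equiv.subtypeEquivRight
    intro H
    have hlast : H ≤ fanG (m+3) → H.Adj prv lst → ∀ z, (H ⊔ eg 0 lst).Adj z lst ↔
        (z = (0 : Fin (m+2)).castSucc ∨ z = (Fin.last (m+1)).castSucc) := by
      intro hf hQ z
      rw [castSucc_zero']
      constructor
      · rintro (h | h)
        · exact (fan_last_adj m z).mp (hf h)
        · rw [fromEdgeSet_adj, Set.mem_singleton_iff] at h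
          rcases Sym2.eq_iff.mp h.1 with ⟨rfl, -⟩ | ⟨rfl, h2⟩
          · exact Or.inl rfl
          · exact absurd h2.symm zero_ne_last
      · rintro (rfl | rfl)
        · exact Or.inr hegadj
        · exact Or.inl hQ
    constructor
    · rintro ⟨⟨hf, hn0, ht⟩, hQ⟩
      rw [deg2_iff _ 0 (Fin.last (m+1)) zero_ne_lastm (hlast hf hQ), hpullM H] at ht
      exact ⟨hf, ⟨fun h => absurd h hn0, fun h => absurd h (by simp)⟩,
        ⟨fun _ => rfl, fun _ => hQ⟩, ht.2, ht.1⟩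
    · rintro ⟨hf, hs, hp, hQ1, hQ2⟩
      have hQ := hp.mpr rfl
      have hn0 : ¬ H.Adj 0 lst := fun h => by simpa using hs.mp h
      refine ⟨⟨hf, hn0, ?_⟩, hQ⟩
      rw [deg2_iff _ 0 (Fin.last (m+1)) zero_ne_lastm (hlast hf hQ), hpullM H]
      exact ⟨hQ2, hQ1⟩
  -- case (false, false) : A (m+2)
  have hff : Nat.card {H : SimpleGraph (Fin (m+3)) //
      (H ≤ fanG (m+3) ∧ (¬ H.Adj 0 lst ∧ (H ⊔ eg 0 lst).IsTree)) ∧ ¬ H.Adj prv lst}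
      = A (m+2) := by
    rw [show A (m+2) = Nat.card {K : SimpleGraph (Fin (m+2)) //
      K ≤ fanG (m+2) ∧ K.IsTree} from rfl,
      ← Nat.card_congr (patternEquiv false false (fun K => K.IsTree))]
    apply Nat.card_congr
    apply Equiv.subtypeEquivRight
    intro H
    have hlast : H ≤ fanG (m+3) → ¬ H.Adj 0 lst → ¬ H.Adj prv lst →
        ∀ z, (H ⊔ eg 0 lst).Adj z lst ↔ z = (0 : Fin (m+2)).castSucc := by
      intro hf hn0 hnp z
      rw [castSucc_zero']
      constructor
      · rintro (h | h)
        · rcases (fan_last_adj m z).mp (hf h) with rfl | rfl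
          · exact absurd h hn0
          · exact absurd h hnp
        · rw [fromEdgeSet_adj, Set.mem_singleton_iff] at h
          rcases Sym2.eq_iff.mp h.1 with ⟨rfl, -⟩ | ⟨rfl, h2⟩
          · rfl
          · exact absurd h2.symm zero_ne_last
      · rintro rfl
        exact Or.inr hegadj
    constructor
    · rintro ⟨⟨hf, hn0, ht⟩, hnp⟩
      rw [leaf_iff _ 0 (by rw [castSucc_zero']; exact hlast hf hn0 hnp), hpullM H] at ht
      exact ⟨hf, ⟨fun h => absurd h hn0, fun h => absurd h (by simp)⟩,
        ⟨fun h => absurd h hnp, fun h => absurd h (by simp)⟩, ht⟩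
    · rintro ⟨hf, hs, hp, hQ⟩
      have hn0 : ¬ H.Adj 0 lst := fun h => by simpa using hs.mp h
      have hnp : ¬ H.Adj prv lst := fun h => by simpa using hp.mp h
      refine ⟨⟨hf, hn0, ?_⟩, hnp⟩
      rw [leaf_iff _ 0 (by rw [castSucc_zero']; exact hlast hf hn0 hnp), hpullM H]
      exact hQ
  rw [show C (m+1) = Nat.card {H : SimpleGraph (Fin (m+3)) // H ≤ fanG (m+3) ∧
    (¬ H.Adj 0 lst ∧ (H ⊔ eg 0 lst).IsTree)} from rfl, h1, hft, hff]
  omega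

lemma fan2_adj (x y : Fin 2) : (fanG 2).Adj x y ↔ ((x = 0 ∧ y = 1) ∨ (x = 1 ∧ y = 0)) := by
  have hx := x.isLt; have hy := y.isLt
  simp only [fanG, fromRel_adj, ne_eq, Fin.ext_iff, Fin.val_zero, Fin.val_one]
  omega

lemma last1 : (Fin.last 1 : Fin 2) = 1 := rfl

lemma tree2 : (eg (0 : Fin 2) 1).IsTree := by
  have hadj : (eg (0 : Fin 2) 1).Adj 0 1 := by
    rw [fromEdgeSet_adj]
    exact ⟨rfl, by decide⟩
  constructor
  · rw [connected_iff]
    refine ⟨?_, ⟨0⟩⟩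
    have key : ∀ v : Fin 2, (eg (0 : Fin 2) 1).Reachable v 0 := by
      intro v
      fin_cases v
      · exact Reachable.refl _
      · exact hadj.symm.reachable
    exact fun x y => (key x).trans (key y).symm
  · rw [isAcyclic_iff_forall_adj_isBridge]
    intro v w h
    rw [isBridge_iff]
    refine fun hr => ?_
    have h' := h
    rw [fromEdgeSet_adj, Set.mem_singleton_iff] at h'
    have hbot : eg (0 : Fin 2) 1 \ eg v w = ⊥ := by
      ext a b
      simp only [sdiff_adj, bot_adj, iff_false]
      rintro ⟨ha, hn⟩
      rw [fromEdgeSet_adj, Set.mem_singleton_iff] at ha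
      apply hn
      rw [fromEdgeSet_adj, Set.mem_singleton_iff]
      exact ⟨ha.1.trans h'.1.symm, ha.2⟩
    rw [deleteEdges, hbot] at hr
    exact h.ne (reachable_bot.mp hr)
  
lemma fan2_eq : fanG 2 = eg (0 : Fin 2) 1 := by
  ext x y
  rw [fan2_adj, fromEdgeSet_adj, Set.mem_singleton_iff, Sym2.eq_iff]
  constructor
  · rintro (⟨rfl, rfl⟩ | ⟨rfl, rfl⟩)
    · exact ⟨Or.inl ⟨rfl, rfl⟩, by decide⟩
    · exact ⟨Or.inr ⟨rfl, rfl⟩, by decide⟩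
  · rintro ⟨(⟨rfl, rfl⟩ | ⟨rfl, rfl⟩), -⟩
    · exact Or.inl ⟨rfl, rfl⟩
    · exact Or.inr ⟨rfl, rfl⟩

lemma A2 : A 2 = 1 := by
  have claim : ∀ H : SimpleGraph (Fin 2), H ≤ fanG 2 → H.IsTree → H = fanG 2 := by
    intro H hf ht
    have h01 : H.Adj 0 1 := by
      obtain ⟨w⟩ := ht.isConnected.preconnected 0 1
      obtain ⟨z, hz, -, -⟩ := Walk.exists_eq_cons_of_ne (by decide) w
      rcases (fan2_adj 0 z).mp (hf hz) with ⟨-, rfl⟩ | ⟨h, -⟩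
      · exact hz
      · exact absurd h (by decide)
    refine le_antisymm hf ?_
    intro x y hxy
    rcases (fan2_adj x y).mp hxy with ⟨rfl, rfl⟩ | ⟨rfl, rfl⟩
    · exact h01
    · exact h01.symm
  rw [A, Nat.card_eq_one_iff_unique]
  refine ⟨⟨fun H1 H2 => Subtype.ext ?_⟩, ⟨fanG 2, le_refl _, fan2_eq ▸ tree2⟩⟩
  rw [claim H1.1 H1.2.1 H1.2.2, claim H2.1 H2.2.1 H2.2.2]

lemma C0 : C 0 = 1 := by
  have claim : ∀ K : SimpleGraph (Fin 2), K ≤ fanG 2 → ¬ K.Adj 0 (Fin.last 1) → K = ⊥ := by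
    intro K hf hn
    rw [last1] at hn
    ext x y
    simp only [bot_adj, iff_false]
    intro hK
    rcases (fan2_adj x y).mp (hf hK) with ⟨rfl, rfl⟩ | ⟨rfl, rfl⟩
    · exact hn hK
    · exact hn hK.symm
  rw [C, Nat.card_eq_one_iff_unique]
  constructor
  · exact ⟨fun K1 K2 => Subtype.ext (by
      rw [claim K1.1 K1.2.1 K1.2.2.1, claim K2.1 K2.2.1 K2.2.2.1])⟩
  · refine ⟨⊥, bot_le, by simp, ?_⟩
    rw [bot_sup_eq, last1]
    exact tree2

lemma AC : ∀ m, A (m+2) = Nat.fib (2*m+2) ∧ C m = Nat.fib (2*m+1) := by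
  intro m
  induction m with
  | zero => exact ⟨by rw [A2]; rfl, by rw [C0]; rfl⟩
  | succ k ih =>
    obtain ⟨hA, hC⟩ := ih
    constructor
    · show A (k+3) = Nat.fib (2*(k+1)+2)
      have h2 : Nat.fib (2*k+2+1) = Nat.fib (2*k+1) + Nat.fib (2*k+2) := Nat.fib_add_two
      have h3 : Nat.fib (2*k+2+2) = Nat.fib (2*k+2) + Nat.fib (2*k+2+1) := Nat.fib_add_two
      rw [show 2*(k+1)+2 = 2*k+2+2 from by ring, A_rec, hA, hC, h3, h2]
      ring
    · show C (k+1) = Nat.fib (2*(k+1)+1)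
      have h2 : Nat.fib (2*k+1+2) = Nat.fib (2*k+1) + Nat.fib (2*k+2) := Nat.fib_add_two
      rw [show 2*(k+1)+1 = 2*k+1+2 from by ring, C_rec, hA, hC, h2]
      ring


lemma fanG_eq (k : ℕ) : fanG k = fanGraph k := rfl

end FanProof

theorem fan_tree_count_eq_fib (n : ℕ) (hn : 2 ≤ n) :
    fanTreeCount n = Nat.fib (2 * (n - 1)) := by
  obtain ⟨m, rfl⟩ := Nat.exists_eq_add_of_le hn
  rw [show 2 + m = m + 2 from by ring]
  have he : fanTreeCount (m+2) = FanProof.A (m+2) := by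
    simp only [fanTreeCount, FanProof.A, FanProof.fanG_eq]
  rw [he, (FanProof.AC m).1, show 2 * (m+2-1) = 2*m+2 from by omega]
end

section
/- The number t_n of spanning trees of the fan graph F_n satisfies the recurrence t_n = 3·t_{n-1} − t_{n-2} for n ≥ 4, with t_2 = 1 and t_3 = 3. -/
set_option linter.unnecessarySeqFocus false
set_option linter.unreachableTactic false
set_option linter.unusedTactic false


open Finset


/-- boolean data: hub edges and path edges -/
abbrev SP (m : ℕ) := (Fin m → Bool) × (Fin m → Bool)

def lastFalse {m : ℕ} (p : Fin m → Bool) : Prop :=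
  ∀ i : Fin m, (i : ℕ) + 1 = m → p i = false

/-- all path edges between i and j are present -/
def blk {m : ℕ} (p : Fin m → Bool) (i j : Fin m) : Prop :=
  ∀ k : Fin m, min (i : ℕ) (j : ℕ) ≤ (k : ℕ) → (k : ℕ) < max (i : ℕ) (j : ℕ) → p k = true

def cnt {m : ℕ} (x : SP m) : ℕ :=
  (univ.filter fun i => x.1 i = true).card + (univ.filter fun i => x.2 i = true).card

def IsGood {m : ℕ} (x : SP m) : Prop :=
  lastFalse x.2 ∧ cnt x = m ∧ ∀ i, ∃ j, x.1 j = true ∧ blk x.2 i j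

def inLast {m : ℕ} (p : Fin m → Bool) (i : Fin m) : Prop :=
  ∀ k : Fin m, (i : ℕ) ≤ (k : ℕ) → (k : ℕ) + 1 < m → p k = true

def IsForest {m : ℕ} (x : SP m) : Prop :=
  lastFalse x.2 ∧ cnt x + 1 = m ∧
    (∀ i, (∃ j, x.1 j = true ∧ blk x.2 i j) ∨ inLast x.2 i) ∧
    (∀ i, inLast x.2 i → x.1 i = false)

noncomputable def cG (m : ℕ) : ℕ := Nat.card {x : SP m // IsGood x}
noncomputable def bG (m : ℕ) : ℕ := Nat.card {x : SP m // IsForest x}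

-- restriction and extension maps
def restr {m : ℕ} (x : SP (m + 2)) : SP (m + 1) :=
  (fun i => x.1 i.castSucc,
   fun i => if i = Fin.last m then false else x.2 i.castSucc)

def extendSP {m : ℕ} (x : SP (m + 1)) (b1 b2 : Bool) : SP (m + 2) :=
  (Fin.snoc x.1 b1, Fin.snoc (Function.update x.2 (Fin.last m) b2) false)

lemma restr_extendSP {m : ℕ} (x : SP (m + 1)) (b1 b2 : Bool) (hlf : lastFalse x.2) :
    restr (extendSP x b1 b2) = x := by
  obtain ⟨s, p⟩ := x
  replace hlf : lastFalse p := hlf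
  refine Prod.ext (funext fun i => ?_) (funext fun i => ?_)
  · simp [restr, extendSP, Fin.snoc_castSucc]
  · simp only [restr, extendSP]
    rcases eq_or_ne i (Fin.last m) with rfl | h
    · rw [if_pos rfl, hlf (Fin.last m) (by simp)]
    · rw [if_neg h, Fin.snoc_castSucc, Function.update_of_ne h]

lemma extendSP_restr {m : ℕ} (x : SP (m + 2)) (hlf : lastFalse x.2) :
    extendSP (restr x) (x.1 (Fin.last (m+1))) (x.2 ((Fin.last m).castSucc)) = x := by
  obtain ⟨s, p⟩ := x
  replace hlf : lastFalse p := hlf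
  refine Prod.ext (funext fun i => ?_) (funext fun i => ?_)
  · induction i using Fin.lastCases with
    | last => simp only [extendSP, restr, Fin.snoc_last]
    | cast j => simp only [extendSP, restr, Fin.snoc_castSucc]
  · induction i using Fin.lastCases with
    | last =>
      simp only [extendSP]
      rw [Fin.snoc_last, hlf (Fin.last (m+1)) (by simp)]
    | cast j =>
      simp only [extendSP]
      rw [Fin.snoc_castSucc]
      rcases eq_or_ne j (Fin.last m) with rfl | h
      · rw [Function.update_self]
      · rw [Function.update_of_ne h]
        show (if j = Fin.last m then false else p j.castSucc) = p j.castSucc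
        rw [if_neg h]

lemma extendSP_bits1 {m : ℕ} (x : SP (m + 1)) (b1 b2 : Bool) :
    (extendSP x b1 b2).1 (Fin.last (m+1)) = b1 := by simp [extendSP]

lemma extendSP_bits2 {m : ℕ} (x : SP (m + 1)) (b1 b2 : Bool) :
    (extendSP x b1 b2).2 ((Fin.last m).castSucc) = b2 := by simp [extendSP, Fin.snoc_castSucc]

lemma extendSP_lastFalse {m : ℕ} (x : SP (m + 1)) (b1 b2 : Bool) :
    lastFalse (extendSP x b1 b2).2 := by
  intro i hi
  have : i = Fin.last (m+1) := by
    apply Fin.ext; simpa using hi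
  subst this
  simp only [extendSP, Fin.snoc_last]
-- interval lemmas (appended to defs)
lemma blk_refl {m : ℕ} (p : Fin m → Bool) (i : Fin m) : blk p i i := by
  intro k h1 h2; omega

lemma blk_comm {m : ℕ} {p : Fin m → Bool} {i j : Fin m} (h : blk p i j) : blk p j i := by
  intro k h1 h2
  exact h k (by omega) (by omega)

lemma blk_trans {m : ℕ} {p : Fin m → Bool} {i j l : Fin m} (h1 : blk p i j) (h2 : blk p j l) :
    blk p i l := by
  intro k hk1 hk2
  rcases le_or_gt (min (i:ℕ) (j:ℕ)) (k:ℕ) with h | h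
  · rcases lt_or_ge (k:ℕ) (max (i:ℕ) (j:ℕ)) with h' | h'
    · exact h1 k h h'
    · exact h2 k (by omega) (by omega)
  · exact h2 k (by omega) (by omega)

/-- extending a block by one path edge -/
lemma blk_step {m : ℕ} {p : Fin m → Bool} {i j i' k : Fin m}
    (h : blk p i j) (hk : p k = true)
    (hrel : ((i':ℕ) = (k:ℕ) + 1 ∧ (i:ℕ) = (k:ℕ)) ∨ ((i':ℕ) = (k:ℕ) ∧ (i:ℕ) = (k:ℕ) + 1)) :
    blk p i' j := by
  intro k' h1 h2
  by_cases hkk : (k':ℕ) = (k:ℕ)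
  · have : k' = k := Fin.ext hkk
    subst this; exact hk
  · exact h k' (by omega) (by omega)

-- counting lemmas
lemma cntBool_succ {m : ℕ} (f : Fin (m+1) → Bool) :
    (Finset.univ.filter fun i => f i = true).card
      = (Finset.univ.filter fun i : Fin m => f i.castSucc = true).card
        + (if f (Fin.last m) = true then 1 else 0) := by
  classical
  rw [Finset.card_filter, Finset.card_filter, Fin.sum_univ_castSucc]

lemma cnt_extendSP {m : ℕ} (y : SP (m+1)) (b1 b2 : Bool) (hlf : lastFalse y.2) :
    cnt (extendSP y b1 b2) = cnt y + ((if b1 = true then 1 else 0) + (if b2 = true then 1 else 0)) := by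
  classical
  unfold cnt
  rw [show (extendSP y b1 b2).1 = Fin.snoc y.1 b1 from rfl,
      show (extendSP y b1 b2).2 = Fin.snoc (Function.update y.2 (Fin.last m) b2) false from rfl,
      cntBool_succ (Fin.snoc y.1 b1),
      cntBool_succ (Fin.snoc (Function.update y.2 (Fin.last m) b2) false)]
  simp only [Fin.snoc_castSucc, Fin.snoc_last]
  rw [cntBool_succ (Function.update y.2 (Fin.last m) b2), cntBool_succ y.2]
  simp only [Function.update_self]
  have h1 : (Finset.univ.filter fun j : Fin m =>
        Function.update y.2 (Fin.last m) b2 j.castSucc = true)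
      = Finset.univ.filter fun j : Fin m => y.2 j.castSucc = true := by
    apply Finset.filter_congr
    intro j _
    rw [Function.update_of_ne (by simp [Fin.ext_iff]; omega)]
  rw [h1, hlf (Fin.last m) (by simp)]
  cases b1 <;> cases b2 <;> simp <;> omega
set_option linter.unnecessarySeqFocus false
-- eval lemmas
lemma extSP_s_cast {m : ℕ} (y : SP (m+1)) (b1 b2 : Bool) (i : Fin (m+1)) :
    (extendSP y b1 b2).1 i.castSucc = y.1 i := by simp [extendSP, Fin.snoc_castSucc]

lemma extSP_s_last {m : ℕ} (y : SP (m+1)) (b1 b2 : Bool) :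
    (extendSP y b1 b2).1 (Fin.last (m+1)) = b1 := by simp [extendSP]

lemma extSP_p_cast {m : ℕ} (y : SP (m+1)) (b1 b2 : Bool) (i : Fin (m+1)) (h : i ≠ Fin.last m) :
    (extendSP y b1 b2).2 i.castSucc = y.2 i := by
  simp only [extendSP]
  rw [Fin.snoc_castSucc, Function.update_of_ne h]

lemma extSP_p_plast {m : ℕ} (y : SP (m+1)) (b1 b2 : Bool) :
    (extendSP y b1 b2).2 (Fin.last m).castSucc = b2 := extendSP_bits2 y b1 b2

lemma extSP_p_last {m : ℕ} (y : SP (m+1)) (b1 b2 : Bool) :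
    (extendSP y b1 b2).2 (Fin.last (m+1)) = false := by
  simp only [extendSP]
  rw [Fin.snoc_last]

lemma blk_cast_iff {m : ℕ} (y : SP (m+1)) (b1 b2 : Bool) (i j : Fin (m+1)) :
    blk (extendSP y b1 b2).2 i.castSucc j.castSucc ↔ blk y.2 i j := by
  have hi := i.isLt; have hj := j.isLt
  constructor
  · intro h k hk1 hk2
    have hk := k.isLt
    have h2 := h k.castSucc (by simp <;> omega) (by simp <;> omega)
    rwa [extSP_p_cast _ _ _ _ (by simp [Fin.ext_iff] <;> omega)] at h2
  · intro h k hk1 hk2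
    simp only [Fin.coe_castSucc] at hk1 hk2
    have hkm : (k : ℕ) < m + 1 := by omega
    have hkval : k = (⟨(k : ℕ), hkm⟩ : Fin (m+1)).castSucc := by simp [Fin.ext_iff]
    rw [hkval, extSP_p_cast _ _ _ _ (by simp [Fin.ext_iff] <;> omega)]
    exact h _ (by simp <;> omega) (by simp <;> omega)

lemma blk_last_iff {m : ℕ} (y : SP (m+1)) (b1 b2 : Bool) (i : Fin (m+1)) :
    blk (extendSP y b1 b2).2 i.castSucc (Fin.last (m+1)) ↔ (b2 = true ∧ inLast y.2 i) := by
  have hi := i.isLt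
  constructor
  · intro h
    constructor
    · have h2 := h ((Fin.last m).castSucc) (by simp <;> omega) (by simp <;> omega)
      rwa [extSP_p_plast] at h2
    · intro k hk1 hk2
      have hk := k.isLt
      have h2 := h k.castSucc (by simp <;> omega) (by simp <;> omega)
      rwa [extSP_p_cast _ _ _ _ (by simp [Fin.ext_iff] <;> omega)] at h2
  · rintro ⟨hb2, hIL⟩ k hk1 hk2
    simp only [Fin.coe_castSucc, Fin.val_last] at hk1 hk2
    have hkm : (k : ℕ) < m + 1 := by omega
    have hkval : k = (⟨(k : ℕ), hkm⟩ : Fin (m+1)).castSucc := by simp [Fin.ext_iff]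
    rcases eq_or_ne ((⟨(k : ℕ), hkm⟩ : Fin (m+1))) (Fin.last m) with he | he
    · rw [hkval, he, extSP_p_plast]; exact hb2
    · rw [hkval, extSP_p_cast _ _ _ _ he]
      have : (k : ℕ) < m := by
        simp [Fin.ext_iff] at he; omega
      exact hIL _ (by simp <;> omega) (by simp <;> omega)

lemma inLast_cast_iff {m : ℕ} (y : SP (m+1)) (b1 b2 : Bool) (i : Fin (m+1)) :
    inLast (extendSP y b1 b2).2 i.castSucc ↔ (b2 = true ∧ inLast y.2 i) := by
  have hi := i.isLt
  constructor
  · intro h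
    constructor
    · have h2 := h ((Fin.last m).castSucc) (by simp <;> omega) (by simp <;> omega)
      rwa [extSP_p_plast] at h2
    · intro k hk1 hk2
      have hk := k.isLt
      have h2 := h k.castSucc (by simp <;> omega) (by simp <;> omega)
      rwa [extSP_p_cast _ _ _ _ (by simp [Fin.ext_iff] <;> omega)] at h2
  · rintro ⟨hb2, hIL⟩ k hk1 hk2
    simp only [Fin.coe_castSucc] at hk1 hk2
    have hkm : (k : ℕ) < m + 1 := by omega
    have hkval : k = (⟨(k : ℕ), hkm⟩ : Fin (m+1)).castSucc := by simp [Fin.ext_iff]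
    rcases eq_or_ne ((⟨(k : ℕ), hkm⟩ : Fin (m+1))) (Fin.last m) with he | he
    · rw [hkval, he, extSP_p_plast]; exact hb2
    · rw [hkval, extSP_p_cast _ _ _ _ he]
      have : (k : ℕ) < m := by
        simp [Fin.ext_iff] at he; omega
      exact hIL _ (by simp <;> omega) (by simp <;> omega)

lemma inLast_last {m : ℕ} (p : Fin (m+1) → Bool) : inLast p (Fin.last m) := by
  intro k h1 h2
  simp at h1
  have := k.isLt
  omega

lemma inLast_iff_blk_last {m : ℕ} (p : Fin (m+1) → Bool) (i : Fin (m+1)) :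
    inLast p i ↔ blk p i (Fin.last m) := by
  have hi := i.isLt
  constructor
  · intro h k h1 h2
    simp only [Fin.val_last] at h1 h2
    exact h k (by omega) (by omega)
  · intro h k h1 h2
    exact h k (by simp only [Fin.val_last] at h1 h2 ⊢ <;> omega)
      (by simp only [Fin.val_last] at h1 h2 ⊢ <;> omega)

lemma forest_slast {m : ℕ} {x : SP (m+1)} (h : IsForest x) : x.1 (Fin.last m) = false :=
  h.2.2.2 _ (inLast_last x.2)
set_option linter.unreachableTactic false
set_option linter.unusedTactic false

section GeneralGraph
open SimpleGraph

variable {V : Type*} {G : SimpleGraph V}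

lemma exists_adj_dist (hG : G.Connected) {v root : V} (hv : v ≠ root) :
    ∃ u, G.Adj v u ∧ G.dist u root + 1 = G.dist v root := by
  have hne : G.dist v root ≠ 0 := by
    rw [SimpleGraph.dist_ne_zero_iff_ne_and_reachable]
    exact ⟨hv, hG.preconnected v root⟩
  obtain ⟨p, hp⟩ := SimpleGraph.exists_walk_of_dist_ne_zero hne
  cases p with
  | nil => exact absurd rfl hv
  | @cons _ u _ h q =>
    refine ⟨u, h, ?_⟩
    have h1 : G.dist u root ≤ q.length := SimpleGraph.dist_le q
    have h2 : G.dist v root ≤ G.dist v u + G.dist u root := hG.dist_triangle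
    have h3 : G.dist v u ≤ 1 := by
      have := SimpleGraph.dist_le (SimpleGraph.Walk.cons h SimpleGraph.Walk.nil)
      simpa using this
    simp only [SimpleGraph.Walk.length_cons] at hp
    omega

lemma card_le_edges [Fintype V] (hG : G.Connected) [Fintype G.edgeSet] :
    Fintype.card V ≤ G.edgeFinset.card + 1 := by
  classical
  obtain ⟨root⟩ := hG.nonempty
  have key : ∀ v : V, v ≠ root → ∃ u, G.Adj v u ∧ G.dist u root + 1 = G.dist v root :=
    fun v hv => exists_adj_dist hG hv
  choose f hadj hdist using key
  have hcard : (Finset.univ.erase root).card ≤ G.edgeFinset.card := by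
    apply Finset.card_le_card_of_injOn
      (fun v => if h : v ≠ root then s(v, f v h) else s(v, v))
    · intro v hv
      have hv' : v ≠ root := Finset.ne_of_mem_erase hv
      simp only [dif_pos hv', Finset.mem_coe]
      rw [SimpleGraph.mem_edgeFinset, SimpleGraph.mem_edgeSet]
      exact hadj v hv'
    · intro a ha b hb hab
      have ha' : a ≠ root := Finset.ne_of_mem_erase ha
      have hb' : b ≠ root := Finset.ne_of_mem_erase hb
      simp only [dif_pos ha', dif_pos hb', Sym2.eq_iff] at hab
      rcases hab with ⟨h1, _⟩ | ⟨h1, h2⟩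
      · exact h1
      · exfalso
        have d1 := hdist a ha'
        have d2 := hdist b hb'
        rw [h2] at d1
        rw [← h1] at d2
        omega
  have : (Finset.univ.erase root).card = Fintype.card V - 1 := by
    rw [Finset.card_erase_of_mem (Finset.mem_univ root), Finset.card_univ]
  have hpos : 0 < Fintype.card V := Fintype.card_pos_iff.mpr ⟨root⟩
  omega

lemma reachable_of_reachable_sup {G' : SimpleGraph V} {a b : V}
    (hab : G'.Reachable a b) (hle : ∀ u w, G.Adj u w → G'.Adj u w ∨ (s(u,w) = s(a,b)))
    {u w : V} (h : G.Reachable u w) : G'.Reachable u w := by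
  obtain ⟨p⟩ := h
  induction p with
  | nil => exact SimpleGraph.Reachable.refl _
  | @cons x y z hxy q ih =>
    refine SimpleGraph.Reachable.trans ?_ ih
    rcases hle x y hxy with h' | h'
    · exact h'.reachable
    · rw [Sym2.eq_iff] at h'
      rcases h' with ⟨rfl, rfl⟩ | ⟨rfl, rfl⟩
      · exact hab
      · exact hab.symm

lemma acyclic_of_card [Fintype V] (hconn : G.Connected) [Fintype G.edgeSet]
    (hcard : G.edgeFinset.card + 1 = Fintype.card V) : G.IsAcyclic := by
  classical
  intro v c hc
  cases c with
  | nil => exact hc.ne_nil rfl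
  | @cons _ u _ h q =>
    -- the edge s(v,u) lies on a cycle, hence is not a bridge
    have hmem : s(v, u) ∈ (SimpleGraph.Walk.cons h q).edges := by
      simp [SimpleGraph.Walk.edges_cons]
    have hnb : ¬ G.IsBridge s(v, u) := by
      rw [SimpleGraph.isBridge_iff_adj_and_forall_cycle_notMem (he := h)]
      push_neg
      exact ⟨v, SimpleGraph.Walk.cons h q, hc, hmem⟩
    rw [SimpleGraph.isBridge_iff] at hnb
    push_neg at hnb
    have hreach : (G \ SimpleGraph.fromEdgeSet {s(v, u)}).Reachable v u := hnb
    set G' := G \ SimpleGraph.fromEdgeSet {s(v, u)} with hG'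
    have hle : ∀ x y, G.Adj x y → G'.Adj x y ∨ (s(x,y) = s(v,u)) := by
      intro x y hxy
      by_cases he : s(x, y) = s(v, u)
      · exact Or.inr he
      · left
        rw [hG', SimpleGraph.sdiff_adj]
        refine ⟨hxy, ?_⟩
        rw [SimpleGraph.fromEdgeSet_adj]
        simp only [Set.mem_singleton_iff]
        tauto
    have hconn' : G'.Connected := by
      rw [SimpleGraph.connected_iff]
      refine ⟨fun a b => ?_, hconn.nonempty⟩
      exact reachable_of_reachable_sup hreach hle (hconn.preconnected a b)
    have hedges : G'.edgeFinset = G.edgeFinset.erase s(v, u) := by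
      ext e
      simp only [SimpleGraph.mem_edgeFinset, Finset.mem_erase]
      rw [hG']
      rw [SimpleGraph.edgeSet_sdiff]
      simp only [Set.mem_diff, SimpleGraph.edgeSet_fromEdgeSet]
      constructor
      · rintro ⟨he, hne⟩
        refine ⟨?_, he⟩
        intro hcontra
        apply hne
        subst hcontra
        simp [Sym2.isDiag_iff_proj_eq, h.ne]
      · rintro ⟨hne, he⟩
        exact ⟨he, by simp [hne, Sym2.isDiag_iff_proj_eq]⟩
    have hG'card := card_le_edges hconn' (G := G')
    rw [hedges, Finset.card_erase_of_mem (by simp [h])] at hG'card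
    have hpos : 0 < G.edgeFinset.card := by
      rw [Finset.card_pos]
      exact ⟨s(v,u), by simp [h]⟩
    omega

lemma walk_closed {C : Set V} (hC : ∀ u v, G.Adj u v → u ∈ C → v ∈ C) {u v : V}
    (w : G.Walk u v) (hu : u ∈ C) : v ∈ C := by
  induction w with
  | nil => exact hu
  | cons h q ih => exact ih (hC _ _ h hu)

end GeneralGraph
-- the graph encoded by boolean data
def toGraph {m : ℕ} (x : SP m) : SimpleGraph (Fin (m+1)) :=
  SimpleGraph.fromRel (fun a b =>
    ((a : ℕ) = 0 ∧ ∃ i : Fin m, x.1 i = true ∧ (b : ℕ) = (i : ℕ) + 1) ∨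
    (∃ i : Fin m, x.2 i = true ∧ (a : ℕ) = (i : ℕ) + 1 ∧ (b : ℕ) = (i : ℕ) + 2))

lemma toGraph_adj {m : ℕ} (x : SP m) (a b : Fin (m+1)) :
    (toGraph x).Adj a b ↔ a ≠ b ∧
      ((∃ i : Fin m, x.1 i = true ∧
          (((a : ℕ) = 0 ∧ (b : ℕ) = (i : ℕ) + 1) ∨ ((b : ℕ) = 0 ∧ (a : ℕ) = (i : ℕ) + 1))) ∨
       (∃ i : Fin m, x.2 i = true ∧
          (((a : ℕ) = (i : ℕ) + 1 ∧ (b : ℕ) = (i : ℕ) + 2) ∨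
           ((b : ℕ) = (i : ℕ) + 1 ∧ (a : ℕ) = (i : ℕ) + 2)))) := by
  show (SimpleGraph.fromRel _).Adj a b ↔ _
  rw [SimpleGraph.fromRel_adj]
  apply and_congr_right'
  constructor
  · rintro ((⟨h0, i, hs, hb⟩ | ⟨i, hp, ha, hb⟩) | (⟨h0, i, hs, hb⟩ | ⟨i, hp, ha, hb⟩))
    · exact Or.inl ⟨i, hs, Or.inl ⟨h0, hb⟩⟩
    · exact Or.inr ⟨i, hp, Or.inl ⟨ha, hb⟩⟩
    · exact Or.inl ⟨i, hs, Or.inr ⟨h0, hb⟩⟩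
    · exact Or.inr ⟨i, hp, Or.inr ⟨ha, hb⟩⟩
  · rintro (⟨i, hs, (⟨h0, hb⟩ | ⟨h0, hb⟩)⟩ | ⟨i, hp, (⟨ha, hb⟩ | ⟨ha, hb⟩)⟩)
    · exact Or.inl (Or.inl ⟨h0, i, hs, hb⟩)
    · exact Or.inr (Or.inl ⟨h0, i, hs, hb⟩)
    · exact Or.inl (Or.inr ⟨i, hp, ha, hb⟩)
    · exact Or.inr (Or.inr ⟨i, hp, ha, hb⟩)

lemma adj_hub {m : ℕ} {x : SP m} {i : Fin m} (hs : x.1 i = true) :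
    (toGraph x).Adj 0 i.succ := by
  rw [toGraph_adj]
  have hi := i.isLt
  refine ⟨?_, Or.inl ⟨i, hs, Or.inl ⟨?_, ?_⟩⟩⟩
  · simp [Fin.ext_iff]
  · simp
  · simp [Fin.val_succ]

lemma adj_path {m : ℕ} {x : SP m} {i : Fin m} (hp : x.2 i = true) (h : (i : ℕ) + 1 < m) :
    (toGraph x).Adj i.succ ⟨(i : ℕ) + 2, by omega⟩ := by
  rw [toGraph_adj]
  refine ⟨?_, Or.inr ⟨i, hp, Or.inl ⟨?_, ?_⟩⟩⟩
  · simp [Fin.ext_iff]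
  · simp [Fin.val_succ]
  · simp

lemma chain_reach {m : ℕ} (x : SP m) : ∀ (d : ℕ) (i j : Fin m), (j : ℕ) = (i : ℕ) + d →
    (∀ k : Fin m, (i : ℕ) ≤ (k : ℕ) → (k : ℕ) < (j : ℕ) → x.2 k = true) →
    (toGraph x).Reachable i.succ j.succ := by
  intro d
  induction d with
  | zero =>
    intro i j hj _
    have : i = j := Fin.ext (by omega)
    subst this
    exact SimpleGraph.Reachable.refl _
  | succ d ih =>
    intro i j hj hall
    have hjlt := j.isLt
    set j' : Fin m := ⟨(i : ℕ) + d, by omega⟩ with hj'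
    have r1 : (toGraph x).Reachable i.succ j'.succ :=
      ih i j' rfl (fun k h1 h2 => hall k h1 (by simp only [hj'] at h2; omega))
    have hpj' : x.2 j' = true := hall j' (by simp [hj']) (by simp [hj']; omega)
    have hadj := adj_path hpj' (by simp [hj']; omega)
    have hcast : (⟨(j' : ℕ) + 2, by simp [hj']; omega⟩ : Fin (m+1)) = j.succ := by
      simp [Fin.ext_iff, hj', Fin.val_succ]; omega
    rw [hcast] at hadj
    exact r1.trans hadj.reachable

lemma connected_of {m : ℕ} (x : SP m) (hconn : ∀ i, ∃ j, x.1 j = true ∧ blk x.2 i j) :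
    (toGraph x).Connected := by
  rw [SimpleGraph.connected_iff]
  refine ⟨?_, ⟨0⟩⟩
  have key : ∀ v : Fin (m+1), (toGraph x).Reachable v 0 := by
    intro v
    rcases eq_or_ne v 0 with rfl | hv
    · exact SimpleGraph.Reachable.refl _
    · have hvv : (v : ℕ) ≠ 0 := by
        intro h; apply hv; ext; simp [h]
      have hvlt := v.isLt
      set i : Fin m := ⟨(v : ℕ) - 1, by omega⟩ with hi
      have hvi : v = i.succ := by simp [Fin.ext_iff, hi, Fin.val_succ]; omega
      obtain ⟨j, hj, hblk⟩ := hconn i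
      have hreach : (toGraph x).Reachable i.succ j.succ := by
        rcases le_total (i : ℕ) (j : ℕ) with h | h
        · exact chain_reach x ((j : ℕ) - (i : ℕ)) i j (by omega)
            (fun k h1 h2 => hblk k (by omega) (by omega))
        · exact (chain_reach x ((i : ℕ) - (j : ℕ)) j i (by omega)
            (fun k h1 h2 => hblk k (by omega) (by omega))).symm
      rw [hvi]
      exact hreach.trans (adj_hub hj).symm.reachable
  intro u v
  exact (key u).trans (key v).symm

lemma conn_of_connected {m : ℕ} (x : SP m) (hc : (toGraph x).Connected) :
    ∀ i : Fin m, ∃ j, x.1 j = true ∧ blk x.2 i j := by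
  intro i
  set D : Set (Fin (m+1)) :=
    {v | (v : ℕ) = 0 ∨ ∃ i' : Fin m, (v : ℕ) = (i' : ℕ) + 1 ∧
        ∃ j, x.1 j = true ∧ blk x.2 i' j} with hD
  have hclosed : ∀ u v, (toGraph x).Adj u v → u ∈ D → v ∈ D := by
    intro u v hadj hu
    rw [toGraph_adj] at hadj
    obtain ⟨hne, hcases⟩ := hadj
    have hvlt := v.isLt
    have hult := u.isLt
    rcases hu with hu0 | ⟨iu, huval, j, hj, hblk⟩
    · rcases hcases with ⟨i', hs, (⟨ha, hb⟩ | ⟨hb, ha⟩)⟩ | ⟨i', hp, (⟨ha, hb⟩ | ⟨hb, ha⟩)⟩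
      · exact Or.inr ⟨i', hb, i', hs, blk_refl _ _⟩
      · exact Or.inl hb
      · exfalso; omega
      · exfalso; omega
    · rcases hcases with ⟨i', hs, (⟨ha, hb⟩ | ⟨hb, ha⟩)⟩ | ⟨i', hp, (⟨ha, hb⟩ | ⟨hb, ha⟩)⟩
      · exfalso; omega
      · exact Or.inl hb
      · -- u = i'+1 = iu+1, v = i'+2
        have hii : i' = iu := Fin.ext (by omega)
        subst hii
        have hlt : (i' : ℕ) + 1 < m := by
          have := i'.isLt; omega
        refine Or.inr ⟨⟨(i' : ℕ) + 1, hlt⟩, by simpa using hb, j, hj, ?_⟩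
        exact blk_step hblk hp (Or.inl ⟨rfl, rfl⟩)
      · -- u = i'+2, v = i'+1
        have hiu : (iu : ℕ) = (i' : ℕ) + 1 := by omega
        refine Or.inr ⟨i', by omega, j, hj, ?_⟩
        exact blk_step hblk hp (Or.inr ⟨rfl, by omega⟩)
  obtain ⟨w⟩ := hc.preconnected 0 i.succ
  have hmem : i.succ ∈ D := walk_closed hclosed w (Or.inl rfl)
  rcases hmem with h0 | ⟨i', hval, j, hj, hblk⟩
  · exfalso; simp [Fin.val_succ] at h0
  · have : i' = i := Fin.ext (by simp [Fin.val_succ] at hval; omega)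
    subst this
    exact ⟨j, hj, hblk⟩
open Finset in
lemma edgeFinset_card {m : ℕ} (x : SP m) (hlf : lastFalse x.2)
    [Fintype (toGraph x).edgeSet] :
    (toGraph x).edgeFinset.card = cnt x := by
  classical
  set F1 : Fin m → Sym2 (Fin (m+1)) := fun i => s(0, i.succ) with hF1
  set F2 : Fin m → Sym2 (Fin (m+1)) :=
    fun i => s(i.succ, ⟨min ((i : ℕ) + 2) m, by omega⟩) with hF2
  have hp_lt : ∀ i : Fin m, x.2 i = true → (i : ℕ) + 1 < m := by
    intro i hi
    have him := i.isLt
    by_contra h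
    push_neg at h
    have : (i : ℕ) + 1 = m := by omega
    rw [hlf i this] at hi
    exact Bool.false_ne_true hi
  have hset : (toGraph x).edgeFinset =
      ((univ.filter fun i => x.1 i = true).image F1) ∪
      ((univ.filter fun i => x.2 i = true).image F2) := by
    ext e
    induction e with
    | _ a b =>
      rw [SimpleGraph.mem_edgeFinset, SimpleGraph.mem_edgeSet, toGraph_adj]
      simp only [Finset.mem_union, Finset.mem_image, Finset.mem_filter, Finset.mem_univ, true_and]
      constructor
      · rintro ⟨hne, ⟨i, hs, (⟨ha, hb⟩ | ⟨hb, ha⟩)⟩ | ⟨i, hp, (⟨ha, hb⟩ | ⟨hb, ha⟩)⟩⟩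
        · refine Or.inl ⟨i, hs, ?_⟩
          rw [hF1]
          congr 1 <;> simp [Fin.ext_iff, Fin.val_succ] <;> omega
        · refine Or.inl ⟨i, hs, ?_⟩
          rw [hF1, Sym2.eq_swap]
          congr 1 <;> simp [Fin.ext_iff, Fin.val_succ] <;> omega
        · refine Or.inr ⟨i, hp, ?_⟩
          have h2 : (i : ℕ) + 2 ≤ m := by have := b.isLt; omega
          rw [hF2]
          congr 1 <;> simp [Fin.ext_iff, Fin.val_succ] <;> omega
        · refine Or.inr ⟨i, hp, ?_⟩
          have h2 : (i : ℕ) + 2 ≤ m := by have := a.isLt; omega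
          rw [hF2, Sym2.eq_swap]
          congr 1 <;> simp [Fin.ext_iff, Fin.val_succ] <;> omega
      · rintro (⟨i, hs, he⟩ | ⟨i, hp, he⟩)
        · have := adj_hub (x := x) hs
          rw [← SimpleGraph.mem_edgeSet] at this
          have h2 : s(a, b) ∈ (toGraph x).edgeSet := by
            rw [← he]; exact this
          rw [SimpleGraph.mem_edgeSet, toGraph_adj] at h2
          exact h2
        · have hlt := hp_lt i hp
          have := adj_path (x := x) hp hlt
          rw [← SimpleGraph.mem_edgeSet] at this
          have h2 : s(a, b) ∈ (toGraph x).edgeSet := by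
            rw [← he, hF2]
            convert this using 2
            simp [Fin.ext_iff]
            omega
          rw [SimpleGraph.mem_edgeSet, toGraph_adj] at h2
          exact h2
  rw [hset, Finset.card_union_of_disjoint, Finset.card_image_of_injOn,
      Finset.card_image_of_injOn]
  · rfl
  · intro i hi j hj hij
    simp only [Finset.coe_filter, Set.mem_setOf_eq] at hi hj
    rw [hF2, Sym2.eq_iff] at hij
    have hi2 := hp_lt i hi.2
    have hj2 := hp_lt j hj.2
    rcases hij with ⟨h1, _⟩ | ⟨h1, h2⟩
    · apply Fin.ext
      simpa [Fin.ext_iff, Fin.val_succ] using h1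
    · exfalso
      simp only [Fin.ext_iff, Fin.val_succ] at h1 h2
      omega
  · intro i _ j _ hij
    rw [hF1, Sym2.eq_iff] at hij
    rcases hij with ⟨_, h1⟩ | ⟨h1, h2⟩
    · apply Fin.ext
      simpa [Fin.ext_iff, Fin.val_succ] using h1
    · exact absurd h2 (Fin.succ_ne_zero i)
  · rw [Finset.disjoint_left]
    rintro e he1 he2
    simp only [Finset.mem_image, Finset.mem_filter, Finset.mem_univ, true_and] at he1 he2
    obtain ⟨i, hi, hei⟩ := he1
    obtain ⟨j, hj, hej⟩ := he2
    rw [← hej, hF1, hF2, Sym2.eq_iff] at hei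
    have hjlt := hp_lt j hj
    rcases hei with ⟨h1, _⟩ | ⟨h1, _⟩
    · exact absurd h1.symm (Fin.succ_ne_zero j)
    · have h2 : (0 : ℕ) = min ((j : ℕ) + 2) m := by
        simpa [Fin.ext_iff] using h1
      omega

lemma cnt_update_false {m : ℕ} (x : SP m) (j : Fin m) (hj : x.1 j = true) :
    cnt (Function.update x.1 j false, x.2) + 1 = cnt x := by
  classical
  unfold cnt
  dsimp only
  have h1 : (Finset.univ.filter fun i => Function.update x.1 j false i = true)
      = (Finset.univ.filter fun i => x.1 i = true).erase j := by
    ext i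
    simp only [Finset.mem_filter, Finset.mem_univ, true_and, Finset.mem_erase]
    rcases eq_or_ne i j with rfl | h
    · simp
    · simp [Function.update_of_ne h, h]
  rw [h1, Finset.card_erase_of_mem (by simp [hj])]
  have : 0 < (Finset.univ.filter fun i => x.1 i = true).card :=
    Finset.card_pos.mpr ⟨j, by simp [hj]⟩
  omega

lemma noDoubleHub {m : ℕ} (x : SP m) (hg : IsGood x) :
    ∀ i j, x.1 i = true → x.1 j = true → blk x.2 i j → i = j := by
  classical
  intro i j hi hj hblk
  by_contra hne
  set x' : SP m := (Function.update x.1 j false, x.2) with hx'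
  have hconn' : ∀ a, ∃ b, x'.1 b = true ∧ blk x'.2 a b := by
    intro a
    obtain ⟨b, hb, hblkb⟩ := hg.2.2 a
    rcases eq_or_ne b j with rfl | hbj
    · refine ⟨i, ?_, ?_⟩
      · simp [hx', Function.update_of_ne hne, hi]
      · exact blk_trans hblkb (blk_comm hblk)
    · exact ⟨b, by simp [hx', Function.update_of_ne hbj, hb], hblkb⟩
  have hc := card_le_edges (connected_of x' hconn')
  rw [edgeFinset_card x' hg.1] at hc
  have hcnt := cnt_update_false x j hj
  rw [← hx'] at hcnt
  have := hg.2.1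
  simp only [Fintype.card_fin] at hc
  omega
lemma fan_adj {n : ℕ} (a b : Fin n) :
    (fanGraph n).Adj a b ↔ a ≠ b ∧
      ((a : ℕ) = 0 ∨ (b : ℕ) = 0 ∨ (b : ℕ) = (a : ℕ) + 1 ∨ (a : ℕ) = (b : ℕ) + 1) := by
  show (SimpleGraph.fromRel _).Adj a b ↔ _
  rw [SimpleGraph.fromRel_adj]
  apply and_congr_right'
  constructor
  · rintro ((h | ⟨h1, h2⟩) | (h | ⟨h1, h2⟩))
    · exact Or.inl h
    · exact Or.inr (Or.inr (Or.inl h2))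
    · exact Or.inr (Or.inl h)
    · exact Or.inr (Or.inr (Or.inr h2))
  · rintro (h | h | h | h)
    · exact Or.inl (Or.inl h)
    · exact Or.inr (Or.inl h)
    · rcases eq_or_ne ((a : ℕ)) 0 with h0 | h0
      · exact Or.inl (Or.inl h0)
      · exact Or.inl (Or.inr ⟨h0, h⟩)
    · rcases eq_or_ne ((b : ℕ)) 0 with h0 | h0
      · exact Or.inr (Or.inl h0)
      · exact Or.inr (Or.inr ⟨h0, h⟩)

lemma toGraph_le_fan {m : ℕ} (x : SP m) : toGraph x ≤ fanGraph (m + 1) := by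
  intro a b hadj
  rw [toGraph_adj] at hadj
  rw [fan_adj]
  obtain ⟨hne, hcases⟩ := hadj
  refine ⟨hne, ?_⟩
  rcases hcases with ⟨i, _, (⟨ha, hb⟩ | ⟨hb, ha⟩)⟩ | ⟨i, _, (⟨ha, hb⟩ | ⟨hb, ha⟩)⟩
  · exact Or.inl ha
  · exact Or.inr (Or.inl hb)
  · exact Or.inr (Or.inr (Or.inl (by omega)))
  · exact Or.inr (Or.inr (Or.inr (by omega)))

lemma isTree_toGraph {m : ℕ} (x : SP m) (hg : IsGood x) : (toGraph x).IsTree := by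
  classical
  have hconn := connected_of x hg.2.2
  refine ⟨hconn, ?_⟩
  apply acyclic_of_card hconn
  rw [edgeFinset_card x hg.1, hg.2.1, Fintype.card_fin]

lemma hub_adj_iff {m : ℕ} (x : SP m) (i : Fin m) :
    (toGraph x).Adj 0 i.succ ↔ x.1 i = true := by
  constructor
  · intro h
    rw [toGraph_adj] at h
    obtain ⟨-, hcases⟩ := h
    rcases hcases with ⟨i', hs, (⟨ha, hb⟩ | ⟨hb, ha⟩)⟩ | ⟨i', hp, (⟨ha, hb⟩ | ⟨hb, ha⟩)⟩
    · have : i' = i := Fin.ext (by simp [Fin.val_succ] at hb; omega)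
      subst this; exact hs
    · exfalso; simp [Fin.val_succ] at hb
    · exfalso; simp at ha
    · exfalso; simp at ha
  · exact adj_hub

lemma path_adj_iff {m : ℕ} (x : SP m) (i : Fin m) (hlt : (i : ℕ) + 1 < m) :
    (toGraph x).Adj i.succ ⟨(i : ℕ) + 2, by omega⟩ ↔ x.2 i = true := by
  constructor
  · intro h
    rw [toGraph_adj] at h
    obtain ⟨-, hcases⟩ := h
    rcases hcases with ⟨i', hs, (⟨ha, hb⟩ | ⟨hb, ha⟩)⟩ | ⟨i', hp, (⟨ha, hb⟩ | ⟨hb, ha⟩)⟩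
    · exfalso; simp [Fin.val_succ] at ha
    · exfalso; simp at hb
    · have : i' = i := Fin.ext (by simp [Fin.val_succ] at ha; omega)
      subst this; exact hp
    · exfalso
      simp only [Fin.val_succ] at hb ha
      simp at ha hb
      omega
  · intro h; exact adj_path h hlt

lemma toGraph_inj {m : ℕ} (x y : SP m) (hx : lastFalse x.2) (hy : lastFalse y.2)
    (h : toGraph x = toGraph y) : x = y := by
  refine Prod.ext (funext fun i => ?_) (funext fun i => ?_)
  · have := hub_adj_iff x i
    rw [h, hub_adj_iff] at this
    rcases hb : y.1 i with _ | _ <;> rcases hb' : x.1 i with _ | _ <;>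
      simp [hb, hb'] at this ⊢
  · have hilt := i.isLt
    by_cases hlt : (i : ℕ) + 1 < m
    · have := path_adj_iff x i hlt
      rw [h, path_adj_iff y i hlt] at this
      rcases hb : y.2 i with _ | _ <;> rcases hb' : x.2 i with _ | _ <;>
        simp [hb, hb'] at this ⊢
    · have hieq : (i : ℕ) + 1 = m := by omega
      rw [hx i hieq, hy i hieq]

lemma toGraph_surj {m : ℕ} (H : SimpleGraph (Fin (m+1))) (hle : H ≤ fanGraph (m+1))
    (htree : H.IsTree) : ∃ x : SP m, IsGood x ∧ toGraph x = H := by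
  classical
  set s : Fin m → Bool := fun i => if H.Adj 0 i.succ then true else false with hs
  set p : Fin m → Bool := fun i =>
    if h : (i : ℕ) + 1 < m then
      (if H.Adj i.succ ⟨(i : ℕ) + 2, by omega⟩ then true else false)
    else false with hp
  have hlf : lastFalse p := by
    intro i hi
    rw [hp]
    simp only
    rw [dif_neg (by omega)]
  have htg : toGraph (s, p) = H := by
    ext a b
    constructor
    · intro hadj
      rw [toGraph_adj] at hadj
      obtain ⟨hne, hcases⟩ := hadj
      rcases hcases with ⟨i, hsi, (⟨ha, hb⟩ | ⟨hb, ha⟩)⟩ | ⟨i, hpi, (⟨ha, hb⟩ | ⟨hb, ha⟩)⟩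
      · rw [hs] at hsi
        simp only at hsi
        split_ifs at hsi with hadj'
        · have h1 : a = 0 := Fin.ext (by simpa using ha)
          have h2 : b = i.succ := Fin.ext (by simp [Fin.val_succ]; omega)
          rw [h1, h2]; exact hadj'
      · rw [hs] at hsi
        simp only at hsi
        split_ifs at hsi with hadj'
        · have h1 : b = 0 := Fin.ext (by simpa using hb)
          have h2 : a = i.succ := Fin.ext (by simp [Fin.val_succ]; omega)
          rw [h1, h2]; exact hadj'.symm
      · rw [hp] at hpi
        simp only at hpi
        split_ifs at hpi with h1 h2
        · have ha' : a = i.succ := Fin.ext (by simp [Fin.val_succ]; omega)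
          have hb' : b = (⟨(i : ℕ) + 2, by omega⟩ : Fin (m+1)) := Fin.ext (by simp; omega)
          rw [ha', hb']; exact h2
      · rw [hp] at hpi
        simp only at hpi
        split_ifs at hpi with h1 h2
        · have ha' : b = i.succ := Fin.ext (by simp [Fin.val_succ]; omega)
          have hb' : a = (⟨(i : ℕ) + 2, by omega⟩ : Fin (m+1)) := Fin.ext (by simp; omega)
          rw [ha', hb']; exact h2.symm
    · intro hadj
      have hfan := hle hadj
      rw [fan_adj] at hfan
      obtain ⟨hne, hcases⟩ := hfan
      have halt := a.isLt
      have hblt := b.isLt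
      have hneval : (a : ℕ) ≠ (b : ℕ) := fun hc => hne (Fin.ext hc)
      rw [toGraph_adj]
      refine ⟨hne, ?_⟩
      rcases hcases with ha0 | hb0 | hba | hab
      · -- a = 0, so b = i+1 for i = b - 1
        have hbne : (b : ℕ) ≠ 0 := by omega
        set i : Fin m := ⟨(b : ℕ) - 1, by omega⟩ with hi
        refine Or.inl ⟨i, ?_, Or.inl ⟨ha0, by simp [hi]; omega⟩⟩
        have hadj' : H.Adj 0 i.succ := by
          have h1 : (0 : Fin (m+1)) = a := Fin.ext (by simpa using ha0.symm)
          have h2 : i.succ = b := Fin.ext (by simp [Fin.val_succ, hi]; omega)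
          rw [h1, h2]; exact hadj
        rw [hs]
        simp only
        rw [if_pos hadj']
      · have hane : (a : ℕ) ≠ 0 := by omega
        set i : Fin m := ⟨(a : ℕ) - 1, by omega⟩ with hi
        refine Or.inl ⟨i, ?_, Or.inr ⟨hb0, by simp [hi]; omega⟩⟩
        have hadj' : H.Adj 0 i.succ := by
          have h1 : (0 : Fin (m+1)) = b := Fin.ext (by simpa using hb0.symm)
          have h2 : i.succ = a := Fin.ext (by simp [Fin.val_succ, hi]; omega)
          rw [h1, h2]; exact hadj.symm
        rw [hs]
        simp only
        rw [if_pos hadj']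
      · -- b = a + 1
        rcases eq_or_ne ((a : ℕ)) 0 with ha0 | ha0
        · set i : Fin m := ⟨(b : ℕ) - 1, by omega⟩ with hi
          refine Or.inl ⟨i, ?_, Or.inl ⟨ha0, by simp [hi]; omega⟩⟩
          have hadj' : H.Adj 0 i.succ := by
            have h1 : (0 : Fin (m+1)) = a := Fin.ext (by simpa using ha0.symm)
            have h2 : i.succ = b := Fin.ext (by simp [Fin.val_succ, hi]; omega)
            rw [h1, h2]; exact hadj
          rw [hs]
          simp only
          rw [if_pos hadj']
        · set i : Fin m := ⟨(a : ℕ) - 1, by omega⟩ with hi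
          have hilt : (i : ℕ) + 1 < m := by simp [hi]; omega
          refine Or.inr ⟨i, ?_, Or.inl ⟨by simp [hi]; omega, by simp [hi]; omega⟩⟩
          have hadj' : H.Adj i.succ ⟨(i : ℕ) + 2, by omega⟩ := by
            have h1 : i.succ = a := Fin.ext (by simp [Fin.val_succ, hi]; omega)
            have h2 : (⟨(i : ℕ) + 2, by omega⟩ : Fin (m+1)) = b := Fin.ext (by simp [hi]; omega)
            rw [h1, h2]; exact hadj
          rw [hp]
          simp only
          rw [dif_pos hilt, if_pos hadj']
      · rcases eq_or_ne ((b : ℕ)) 0 with hb0 | hb0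
        · set i : Fin m := ⟨(a : ℕ) - 1, by omega⟩ with hi
          refine Or.inl ⟨i, ?_, Or.inr ⟨hb0, by simp [hi]; omega⟩⟩
          have hadj' : H.Adj 0 i.succ := by
            have h1 : (0 : Fin (m+1)) = b := Fin.ext (by simpa using hb0.symm)
            have h2 : i.succ = a := Fin.ext (by simp [Fin.val_succ, hi]; omega)
            rw [h1, h2]; exact hadj.symm
          rw [hs]
          simp only
          rw [if_pos hadj']
        · set i : Fin m := ⟨(b : ℕ) - 1, by omega⟩ with hi
          have hilt : (i : ℕ) + 1 < m := by simp [hi]; omega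
          refine Or.inr ⟨i, ?_, Or.inr ⟨by simp [hi]; omega, by simp [hi]; omega⟩⟩
          have hadj' : H.Adj i.succ ⟨(i : ℕ) + 2, by omega⟩ := by
            have h1 : i.succ = b := Fin.ext (by simp [Fin.val_succ, hi]; omega)
            have h2 : (⟨(i : ℕ) + 2, by omega⟩ : Fin (m+1)) = a := Fin.ext (by simp [hi]; omega)
            rw [h1, h2]; exact hadj.symm
          rw [hp]
          simp only
          rw [dif_pos hilt, if_pos hadj']
  refine ⟨(s, p), ⟨hlf, ?_, ?_⟩, htg⟩
  · have h1 := htree.card_edgeFinset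
    have h2 : (toGraph (s, p)).edgeFinset.card = cnt (s, p) := edgeFinset_card (s, p) hlf
    rw [htg] at h2
    rw [Fintype.card_fin] at h1
    have h3 : H.edgeFinset.card = H.edgeFinset.card := rfl
    -- the two edgeFinset instances may differ; use Set.toFinset_card-free route
    omega
  · apply conn_of_connected
    rw [htg]
    exact htree.isConnected

lemma treeCount_eq {m : ℕ} :
    Nat.card {H : SimpleGraph (Fin (m+1)) // H ≤ fanGraph (m+1) ∧ H.IsTree}
      = Nat.card {x : SP m // IsGood x} := by
  classical
  apply Nat.card_congr
  apply Equiv.symm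
  refine Equiv.ofBijective
    (fun x => ⟨toGraph x.1, toGraph_le_fan x.1, isTree_toGraph x.1 x.2⟩) ⟨?_, ?_⟩
  · rintro ⟨x, hx⟩ ⟨y, hy⟩ hxy
    simp only [Subtype.mk.injEq] at hxy ⊢
    exact toGraph_inj x y hx.1 hy.1 hxy
  · rintro ⟨H, hle, htree⟩
    obtain ⟨x, hgood, hxg⟩ := toGraph_surj H hle htree
    exact ⟨⟨x, hgood⟩, by simp [hxg]⟩
section Content
variable {m : ℕ} (y : SP (m+1))

lemma good_ext_TF (hlf : lastFalse y.2) : IsGood (extendSP y true false) ↔ IsGood y := by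
  constructor
  · rintro ⟨-, hcnt, hconn⟩
    rw [cnt_extendSP y true false hlf] at hcnt
    refine ⟨hlf, by simp at hcnt; omega, ?_⟩
    intro i
    obtain ⟨j, hj, hblk⟩ := hconn i.castSucc
    rcases Fin.eq_castSucc_or_eq_last j with ⟨j', rfl⟩ | rfl
    · rw [extSP_s_cast] at hj
      rw [blk_cast_iff] at hblk
      exact ⟨j', hj, hblk⟩
    · rw [blk_last_iff] at hblk
      simp at hblk
  · rintro ⟨-, hcnt, hconn⟩
    refine ⟨extendSP_lastFalse y true false, by rw [cnt_extendSP y true false hlf]; simp; omega, ?_⟩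
    intro i
    rcases Fin.eq_castSucc_or_eq_last i with ⟨i', rfl⟩ | rfl
    · obtain ⟨j, hj, hblk⟩ := hconn i'
      exact ⟨j.castSucc, by rw [extSP_s_cast]; exact hj, (blk_cast_iff y true false i' j).mpr hblk⟩
    · exact ⟨Fin.last (m+1), extSP_s_last y true false, blk_refl _ _⟩

lemma good_ext_FT (hlf : lastFalse y.2) : IsGood (extendSP y false true) ↔ IsGood y := by
  constructor
  · rintro ⟨-, hcnt, hconn⟩
    rw [cnt_extendSP y false true hlf] at hcnt
    refine ⟨hlf, by simp at hcnt; omega, ?_⟩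
    intro i
    obtain ⟨j, hj, hblk⟩ := hconn i.castSucc
    rcases Fin.eq_castSucc_or_eq_last j with ⟨j', rfl⟩ | rfl
    · rw [extSP_s_cast] at hj
      rw [blk_cast_iff] at hblk
      exact ⟨j', hj, hblk⟩
    · rw [extSP_s_last] at hj
      exact absurd hj (by simp)
  · rintro ⟨-, hcnt, hconn⟩
    refine ⟨extendSP_lastFalse y false true, by rw [cnt_extendSP y false true hlf]; simp; omega, ?_⟩
    intro i
    rcases Fin.eq_castSucc_or_eq_last i with ⟨i', rfl⟩ | rfl
    · obtain ⟨j, hj, hblk⟩ := hconn i'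
      exact ⟨j.castSucc, by rw [extSP_s_cast]; exact hj, (blk_cast_iff y false true i' j).mpr hblk⟩
    · -- hub of the last block of y serves
      obtain ⟨j, hj, hblk⟩ := hconn (Fin.last m)
      refine ⟨j.castSucc, by rw [extSP_s_cast]; exact hj, ?_⟩
      apply blk_comm
      rw [blk_last_iff]
      refine ⟨rfl, ?_⟩
      rw [inLast_iff_blk_last]
      exact blk_comm hblk

lemma good_ext_TT (hlf : lastFalse y.2) : IsGood (extendSP y true true) ↔ IsForest y := by
  constructor
  · rintro ⟨hlf', hcnt, hconn⟩
    have hgood : IsGood (extendSP y true true) := ⟨hlf', hcnt, hconn⟩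
    rw [cnt_extendSP y true true hlf] at hcnt
    refine ⟨hlf, by simp at hcnt; omega, ?_, ?_⟩
    · intro i
      obtain ⟨j, hj, hblk⟩ := hconn i.castSucc
      rcases Fin.eq_castSucc_or_eq_last j with ⟨j', rfl⟩ | rfl
      · rw [extSP_s_cast] at hj
        rw [blk_cast_iff] at hblk
        exact Or.inl ⟨j', hj, hblk⟩
      · rw [blk_last_iff] at hblk
        exact Or.inr hblk.2
    · -- no hub edge in the last block
      intro i hIL
      by_contra hcon
      have hi : y.1 i = true := by
        rcases h : y.1 i with _ | _
        · exact absurd h hcon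
        · rfl
      have h1 : (extendSP y true true).1 i.castSucc = true := by
        rw [extSP_s_cast]; exact hi
      have h2 : (extendSP y true true).1 (Fin.last (m+1)) = true := extSP_s_last y true true
      have h3 : blk (extendSP y true true).2 i.castSucc (Fin.last (m+1)) := by
        rw [blk_last_iff]; exact ⟨rfl, hIL⟩
      have := noDoubleHub _ hgood _ _ h1 h2 h3
      have hlt := i.isLt
      simp [Fin.ext_iff] at this
      omega
  · rintro ⟨-, hcnt, hthird, hfourth⟩
    refine ⟨extendSP_lastFalse y true true, by rw [cnt_extendSP y true true hlf]; simp; omega, ?_⟩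
    intro i
    rcases Fin.eq_castSucc_or_eq_last i with ⟨i', rfl⟩ | rfl
    · rcases hthird i' with ⟨j, hj, hblk⟩ | hIL
      · exact ⟨j.castSucc, by rw [extSP_s_cast]; exact hj, (blk_cast_iff y true true i' j).mpr hblk⟩
      · exact ⟨Fin.last (m+1), extSP_s_last y true true, (blk_last_iff y true true i').mpr ⟨rfl, hIL⟩⟩
    · exact ⟨Fin.last (m+1), extSP_s_last y true true, blk_refl _ _⟩

lemma not_good_ext_FF (hlf : lastFalse y.2) : ¬ IsGood (extendSP y false false) := by
  rintro ⟨-, -, hconn⟩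
  obtain ⟨j, hj, hblk⟩ := hconn (Fin.last (m+1))
  rcases Fin.eq_castSucc_or_eq_last j with ⟨j', rfl⟩ | rfl
  · have := (blk_last_iff y false false j').mp (blk_comm hblk)
    simp at this
  · rw [extSP_s_last] at hj
    exact absurd hj (by simp)

lemma forest_ext_FF (hlf : lastFalse y.2) : IsForest (extendSP y false false) ↔ IsGood y := by
  constructor
  · rintro ⟨-, hcnt, hthird, -⟩
    rw [cnt_extendSP y false false hlf] at hcnt
    refine ⟨hlf, by simp at hcnt; omega, ?_⟩
    intro i
    rcases hthird i.castSucc with ⟨j, hj, hblk⟩ | hIL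
    · rcases Fin.eq_castSucc_or_eq_last j with ⟨j', rfl⟩ | rfl
      · rw [extSP_s_cast] at hj
        rw [blk_cast_iff] at hblk
        exact ⟨j', hj, hblk⟩
      · rw [extSP_s_last] at hj
        exact absurd hj (by simp)
    · rw [inLast_cast_iff] at hIL
      simp at hIL
  · rintro ⟨-, hcnt, hconn⟩
    refine ⟨extendSP_lastFalse y false false,
      by rw [cnt_extendSP y false false hlf]; simp; omega, ?_, ?_⟩
    · intro i
      rcases Fin.eq_castSucc_or_eq_last i with ⟨i', rfl⟩ | rfl
      · obtain ⟨j, hj, hblk⟩ := hconn i'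
        exact Or.inl ⟨j.castSucc, by rw [extSP_s_cast]; exact hj,
          (blk_cast_iff y false false i' j).mpr hblk⟩
      · exact Or.inr (inLast_last _)
    · intro i hIL
      rcases Fin.eq_castSucc_or_eq_last i with ⟨i', rfl⟩ | rfl
      · rw [inLast_cast_iff] at hIL
        simp at hIL
      · exact extSP_s_last y false false

lemma forest_ext_FT (hlf : lastFalse y.2) : IsForest (extendSP y false true) ↔ IsForest y := by
  constructor
  · rintro ⟨-, hcnt, hthird, hfourth⟩
    rw [cnt_extendSP y false true hlf] at hcnt
    refine ⟨hlf, by simp at hcnt; omega, ?_, ?_⟩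
    · intro i
      rcases hthird i.castSucc with ⟨j, hj, hblk⟩ | hIL
      · rcases Fin.eq_castSucc_or_eq_last j with ⟨j', rfl⟩ | rfl
        · rw [extSP_s_cast] at hj
          rw [blk_cast_iff] at hblk
          exact Or.inl ⟨j', hj, hblk⟩
        · rw [extSP_s_last] at hj
          exact absurd hj (by simp)
      · rw [inLast_cast_iff] at hIL
        exact Or.inr hIL.2
    · intro i hIL
      have := hfourth i.castSucc ((inLast_cast_iff y false true i).mpr ⟨rfl, hIL⟩)
      rwa [extSP_s_cast] at this
  · rintro ⟨-, hcnt, hthird, hfourth⟩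
    refine ⟨extendSP_lastFalse y false true,
      by rw [cnt_extendSP y false true hlf]; simp; omega, ?_, ?_⟩
    · intro i
      rcases Fin.eq_castSucc_or_eq_last i with ⟨i', rfl⟩ | rfl
      · rcases hthird i' with ⟨j, hj, hblk⟩ | hIL
        · exact Or.inl ⟨j.castSucc, by rw [extSP_s_cast]; exact hj,
            (blk_cast_iff y false true i' j).mpr hblk⟩
        · exact Or.inr ((inLast_cast_iff y false true i').mpr ⟨rfl, hIL⟩)
      · exact Or.inr (inLast_last _)
    · intro i hIL
      rcases Fin.eq_castSucc_or_eq_last i with ⟨i', rfl⟩ | rfl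
      · rw [inLast_cast_iff] at hIL
        rw [extSP_s_cast]
        exact hfourth i' hIL.2
      · exact extSP_s_last y false true

end Content
lemma restr_lastFalse {m : ℕ} (x : SP (m+2)) : lastFalse (restr x).2 := by
  intro i hi
  have : i = Fin.last m := Fin.ext (by simpa using hi)
  simp [restr, this]

lemma piece_card {m : ℕ} (P : SP (m+2) → Prop) (Q : SP (m+1) → Prop) (b1 b2 : Bool)
    (hPlf : ∀ x, P x → lastFalse x.2)
    (hQlf : ∀ y, Q y → lastFalse y.2)
    (hiff : ∀ y, lastFalse y.2 → (P (extendSP y b1 b2) ↔ Q y)) :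
    Nat.card {x : SP (m+2) // P x ∧ x.1 (Fin.last (m+1)) = b1 ∧ x.2 ((Fin.last m).castSucc) = b2}
      = Nat.card {y : SP (m+1) // Q y} := by
  apply Nat.card_congr
  refine ⟨fun x => ⟨restr x.1, ?_⟩,
          fun y => ⟨extendSP y.1 b1 b2, (hiff y.1 (hQlf _ y.2)).mpr y.2,
                    extendSP_bits1 _ _ _, extendSP_bits2 _ _ _⟩, ?_, ?_⟩
  · obtain ⟨x, hP, h1, h2⟩ := x
    have he : extendSP (restr x) b1 b2 = x := by
      rw [← h1, ← h2]; exact extendSP_restr x (hPlf _ hP)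
    exact (hiff _ (restr_lastFalse x)).mp (by rw [he]; exact hP)
  · rintro ⟨x, hP, h1, h2⟩
    apply Subtype.ext
    show extendSP (restr x) b1 b2 = x
    rw [← h1, ← h2]
    exact extendSP_restr x (hPlf _ hP)
  · rintro ⟨y, hQ⟩
    apply Subtype.ext
    exact restr_extendSP y b1 b2 (hQlf _ hQ)

lemma card_split {α : Type*} [Finite α] (P : α → Prop) (f : α → Bool) :
    Nat.card {x // P x}
      = Nat.card {x // P x ∧ f x = true} + Nat.card {x // P x ∧ f x = false} := by
  classical
  rw [← Nat.card_sum]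
  apply Nat.card_congr
  refine Equiv.symm ?_
  refine Equiv.trans (Equiv.sumCongr ?_ ?_) (Equiv.sumCompl (fun x : {x // P x} => f x.1 = true))
  · exact (Equiv.subtypeSubtypeEquivSubtypeInter P (fun x => f x = true)).symm
  · exact (Equiv.subtypeEquivRight (fun x => by rw [Bool.not_eq_true])).trans
      (Equiv.subtypeSubtypeEquivSubtypeInter P (fun x => ¬ f x = true)).symm
section Recurrences
variable (m : ℕ)

private lemma split4 (P : SP (m+2) → Prop) :
    Nat.card {x : SP (m+2) // P x}
      = (Nat.card {x : SP (m+2) // P x ∧ x.1 (Fin.last (m+1)) = true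
            ∧ x.2 ((Fin.last m).castSucc) = true}
        + Nat.card {x : SP (m+2) // P x ∧ x.1 (Fin.last (m+1)) = true
            ∧ x.2 ((Fin.last m).castSucc) = false})
        + (Nat.card {x : SP (m+2) // P x ∧ x.1 (Fin.last (m+1)) = false
            ∧ x.2 ((Fin.last m).castSucc) = true}
        + Nat.card {x : SP (m+2) // P x ∧ x.1 (Fin.last (m+1)) = false
            ∧ x.2 ((Fin.last m).castSucc) = false}) := by
  rw [card_split P (fun x => x.1 (Fin.last (m+1)))]
  congr 1
  · rw [card_split (fun x => P x ∧ x.1 (Fin.last (m+1)) = true)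
        (fun x => x.2 ((Fin.last m).castSucc))]
    congr 1 <;> exact Nat.card_congr (Equiv.subtypeEquivRight (fun x => by tauto))
  · rw [card_split (fun x => P x ∧ x.1 (Fin.last (m+1)) = false)
        (fun x => x.2 ((Fin.last m).castSucc))]
    congr 1 <;> exact Nat.card_congr (Equiv.subtypeEquivRight (fun x => by tauto))

lemma cG_rec : cG (m+2) = 2 * cG (m+1) + bG (m+1) := by
  rw [cG, split4 m IsGood]
  have hTT := piece_card (m := m) IsGood IsForest true true
    (fun x hx => hx.1) (fun y hy => hy.1) (fun y hlf => good_ext_TT y hlf)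
  have hTF := piece_card (m := m) IsGood IsGood true false
    (fun x hx => hx.1) (fun y hy => hy.1) (fun y hlf => good_ext_TF y hlf)
  have hFT := piece_card (m := m) IsGood IsGood false true
    (fun x hx => hx.1) (fun y hy => hy.1) (fun y hlf => good_ext_FT y hlf)
  have hFF : Nat.card {x : SP (m+2) // IsGood x ∧ x.1 (Fin.last (m+1)) = false
      ∧ x.2 ((Fin.last m).castSucc) = false} = 0 := by
    have : IsEmpty {x : SP (m+2) // IsGood x ∧ x.1 (Fin.last (m+1)) = false
        ∧ x.2 ((Fin.last m).castSucc) = false} := by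
      refine ⟨fun z => ?_⟩
      obtain ⟨x, hP, h1, h2⟩ := z
      have he := extendSP_restr x hP.1
      rw [h1, h2] at he
      exact not_good_ext_FF (restr x) (restr_lastFalse x) (by rw [he]; exact hP)
    exact Nat.card_of_isEmpty
  rw [hTT, hTF, hFT, hFF]
  show bG (m+1) + cG (m+1) + (cG (m+1) + 0) = _
  ring

lemma bG_rec : bG (m+2) = cG (m+1) + bG (m+1) := by
  rw [bG, split4 m IsForest]
  have hFT := piece_card (m := m) IsForest IsForest false true
    (fun x hx => hx.1) (fun y hy => hy.1) (fun y hlf => forest_ext_FT y hlf)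
  have hFF := piece_card (m := m) IsForest IsGood false false
    (fun x hx => hx.1) (fun y hy => hy.1) (fun y hlf => forest_ext_FF y hlf)
  have hT : ∀ b : Bool, Nat.card {x : SP (m+2) // IsForest x ∧ x.1 (Fin.last (m+1)) = true
      ∧ x.2 ((Fin.last m).castSucc) = b} = 0 := by
    intro b
    have : IsEmpty {x : SP (m+2) // IsForest x ∧ x.1 (Fin.last (m+1)) = true
        ∧ x.2 ((Fin.last m).castSucc) = b} := by
      refine ⟨fun z => ?_⟩
      obtain ⟨x, hP, h1, _⟩ := z
      rw [forest_slast hP] at h1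
      exact Bool.false_ne_true h1
    exact Nat.card_of_isEmpty
  rw [hFT, hFF, hT true, hT false]
  show 0 + 0 + (bG (m+1) + cG (m+1)) = _
  ring

end Recurrences

instance {m : ℕ} (x : SP m) : Decidable (IsGood x) := by
  unfold IsGood lastFalse blk cnt
  infer_instance

instance {m : ℕ} (x : SP m) : Decidable (IsForest x) := by
  unfold IsForest lastFalse blk inLast cnt
  infer_instance

lemma cG_one : cG 1 = 1 := by
  rw [cG, Nat.card_eq_fintype_card]
  decide

lemma bG_one : bG 1 = 1 := by
  rw [bG, Nat.card_eq_fintype_card]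
  decide

lemma fanTreeCount_eq (m : ℕ) : fanTreeCount (m+1) = cG m := by
  rw [fanTreeCount, cG]
  exact treeCount_eq

theorem fan_tree_count_recurrence (n : ℕ) (hn : 4 ≤ n) :
    (fanTreeCount n : ℤ) = 3 * fanTreeCount (n - 1) - fanTreeCount (n - 2) ∧
    fanTreeCount 2 = 1 ∧ fanTreeCount 3 = 3 := by
  have base2 : fanTreeCount 2 = 1 := by
    rw [show (2 : ℕ) = 1 + 1 from rfl, fanTreeCount_eq 1, cG_one]
  have base3 : fanTreeCount 3 = 3 := by
    rw [show (3 : ℕ) = 2 + 1 from rfl, fanTreeCount_eq 2]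
    have := cG_rec 0
    rw [this, cG_one, bG_one]
  refine ⟨?_, base2, base3⟩
  obtain ⟨k, rfl⟩ : ∃ k, n = k + 4 := ⟨n - 4, by omega⟩
  have e0 : fanTreeCount (k+4) = cG (k+3) := fanTreeCount_eq (k+3)
  have e1 : fanTreeCount (k+4-1) = cG (k+2) := fanTreeCount_eq (k+2)
  have e2 : fanTreeCount (k+4-2) = cG (k+1) := fanTreeCount_eq (k+1)
  rw [e0, e1, e2]
  have r1 : cG (k+3) = 2 * cG (k+2) + bG (k+2) := cG_rec (k+1)
  have r2 : cG (k+2) = 2 * cG (k+1) + bG (k+1) := cG_rec k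
  have r3 : bG (k+2) = cG (k+1) + bG (k+1) := bG_rec k
  omega
end

section
/- For n ≥ 2, the number of spanning trees of F_n equals 2·((3−√5)/2)^n − ((3+√5)/2)^{n−2}) / (5 − 3√5). -/
namespace FanAux

abbrev Cfg := (ℕ → Bool) × (ℕ → Bool)

/-- interval between i and j fully present -/
def Blk (e : ℕ → Bool) (i j : ℕ) : Prop := ∀ k, min i j ≤ k → k < max i j → e k = true

lemma blk_refl (e : ℕ → Bool) (i : ℕ) : Blk e i i := by intro k h1 h2; omega

lemma blk_symm {e : ℕ → Bool} {i j : ℕ} (h : Blk e i j) : Blk e j i := by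
  intro k h1 h2; exact h k (by omega) (by omega)

lemma blk_succ {e : ℕ → Bool} {t : ℕ} (he : e t = true) (v : ℕ) :
    Blk e v t ↔ Blk e v (t + 1) := by
  constructor <;> intro h k h1 h2 <;> rcases eq_or_ne k t with rfl | hne
  · exact he
  · exact h k (by omega) (by omega)
  · exact he
  · exact h k (by omega) (by omega)

lemma blk_trans {e : ℕ → Bool} {i j k : ℕ} (h1 : Blk e i j) (h2 : Blk e i k) :
    Blk e j k := by
  intro k' a b
  rcases (show (min i j ≤ k' ∧ k' < max i j) ∨ (min i k ≤ k' ∧ k' < max i k) from by omega)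
    with ⟨a', b'⟩ | ⟨a', b'⟩
  · exact h1 k' a' b'
  · exact h2 k' a' b'

lemma blk_stop {e : ℕ → Bool} {t v : ℕ} (he : e t = false) (hv : v ≤ t) :
    ¬ Blk e v (t + 1) := by
  intro h
  have := h t (by omega) (by omega)
  simp [he] at this

/-- one-step transition of the block/spoke validity automaton.
state `some true`: all blocks so far OK, current block has its (unique) spoke;
`some false`: current block has no spoke yet; `none`: failure. -/
def step (q : Option Bool) (e s : Bool) : Option Bool :=
  match q with
  | none => none
  | some b =>
    if e then (if s then (if b then none else some true) else some b)
    else (if b then some s else none)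

/-- state after reading vertices 1..i -/
def st (c : Cfg) : ℕ → Option Bool
  | 0 => none
  | 1 => some (c.1 1)
  | (i+2) => step (st c (i+1)) (c.2 (i+1)) (c.1 (i+2))

lemma st_succ (c : Cfg) {i : ℕ} (hi : 1 ≤ i) :
    st c (i+1) = step (st c i) (c.2 i) (c.1 (i+1)) := by
  obtain ⟨j, rfl⟩ : ∃ j, i = j + 1 := ⟨i - 1, by omega⟩
  rfl

lemma st_congr (c c' : Cfg) (i : ℕ)
    (hs : ∀ k, 1 ≤ k → k ≤ i → c.1 k = c'.1 k)
    (he : ∀ k, 1 ≤ k → k < i → c.2 k = c'.2 k) : st c i = st c' i := by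
  induction i with
  | zero => rfl
  | succ i ih =>
    rcases Nat.eq_zero_or_pos i with rfl | hi
    · show some (c.1 1) = some (c'.1 1); rw [hs 1 le_rfl le_rfl]
    · rw [st_succ c hi, st_succ c' hi, ih (fun k h1 h2 => hs k h1 (by omega))
        (fun k h1 h2 => he k h1 (by omega)), hs (i+1) (by omega) le_rfl,
        he i hi (by omega)]

/-- every vertex's block in `[1,m]` has a unique spoke -/
def Good (m : ℕ) (c : Cfg) : Prop :=
  ∀ v, 1 ≤ v → v ≤ m → ∃! j, 1 ≤ j ∧ j ≤ m ∧ Blk c.2 v j ∧ c.1 j = true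

/-- blocks not touching `i` have unique spokes; block of `i` has no spoke yet -/
def OpenB (i : ℕ) (c : Cfg) : Prop :=
  (∀ v, 1 ≤ v → v ≤ i → ¬ Blk c.2 v i →
    ∃! j, 1 ≤ j ∧ j ≤ i ∧ Blk c.2 v j ∧ c.1 j = true) ∧
  (∀ j, 1 ≤ j → j ≤ i → Blk c.2 j i → c.1 j = false)

def Fail1 (i : ℕ) (c : Cfg) : Prop :=
  ∃ v, 1 ≤ v ∧ v ≤ i ∧ ∀ j, 1 ≤ j → Blk c.2 v j → c.1 j = false

def Fail2 (i : ℕ) (c : Cfg) : Prop :=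
  ∃ j j', 1 ≤ j ∧ j < j' ∧ j' ≤ i ∧ Blk c.2 j j' ∧ c.1 j = true ∧ c.1 j' = true


theorem invariant (c : Cfg) (i : ℕ) (hi : 1 ≤ i) :
    (st c i = some true → Good i c) ∧
    (st c i = some false → OpenB i c) ∧
    (st c i = none → Fail1 i c ∨ Fail2 i c) := by
  induction i with
  | zero => omega
  | succ i ih =>
    rcases Nat.eq_zero_or_pos i with rfl | hi'
    · -- base case i = 1
      have hst1 : st c 1 = some (c.1 1) := rfl
      refine ⟨?_, ?_, ?_⟩ <;> intro h <;> rw [hst1] at h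
      · have h1 : c.1 1 = true := by simpa using h
        intro v hv1 hv2
        have hv : v = 1 := by omega
        subst hv
        refine ⟨1, ⟨le_rfl, le_rfl, blk_refl _ _, h1⟩, ?_⟩
        intro j hj
        omega
      · have h1 : c.1 1 = false := by simpa using h
        constructor
        · intro v hv1 hv2 hb
          exfalso
          have hv : v = 1 := by omega
          subst hv
          exact hb (blk_refl _ _)
        · intro j hj1 hj2 _
          have hj : j = 1 := by omega
          subst hj
          exact h1
      · simp at h
    · -- inductive step
      obtain ⟨IH1, IH2, IH3⟩ := ih hi'
      have failmono : Fail1 i c ∨ Fail2 i c → Fail1 (i+1) c ∨ Fail2 (i+1) c := by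
        rintro (⟨v, h1, h2, h3⟩ | ⟨j, j', h1, h2, h3, h4, h5, h6⟩)
        · exact Or.inl ⟨v, h1, by omega, h3⟩
        · exact Or.inr ⟨j, j', h1, h2, by omega, h4, h5, h6⟩
      have hsucc := st_succ c hi'
      rcases hst : st c i with _ | b
      · have hR : st c (i+1) = none := by rw [hsucc, hst]; rfl
        rw [hR]
        exact ⟨fun h => by simp at h, fun h => by simp at h, fun _ => failmono (IH3 hst)⟩
      · rcases hEv : c.2 i with _ | _ <;> rcases hSv : c.1 (i+1) with _ | _ <;>
          rcases b with _ | _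
        -- E=false, S=false, b=false : close spokeless block → fail
        · have hR : st c (i+1) = none := by rw [hsucc, hst, hEv, hSv]; rfl
          rw [hR]
          obtain ⟨O1, O2⟩ := IH2 hst
          refine ⟨fun h => by simp at h, fun h => by simp at h, fun _ => Or.inl ⟨i, hi', by omega, ?_⟩⟩
          intro j hj1 hb
          rcases Nat.lt_or_ge j (i+1) with hj | hj
          · exact O2 j hj1 (by omega) (blk_symm hb)
          · exfalso
            have h2 := hb i (by omega) (by omega)
            rw [hEv] at h2
            exact Bool.false_ne_true h2
        -- E=false, S=false, b=true : close complete block, open new spokeless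
        · have hR : st c (i+1) = some false := by rw [hsucc, hst, hEv, hSv]; rfl
          rw [hR]
          have G := IH1 hst
          refine ⟨fun h => by simp at h, fun _ => ⟨?_, ?_⟩, fun h => by simp at h⟩
          · intro v hv1 hv2 hb
            have hvi : v ≤ i := by
              rcases Nat.lt_or_ge v (i+1) with h | h
              · omega
              · exfalso
                have hveq : v = i+1 := by omega
                subst hveq
                exact hb (blk_refl _ _)
            obtain ⟨j, ⟨hj1, hj2, hj3, hj4⟩, hj5⟩ := G v hv1 hvi
            refine ⟨j, ⟨hj1, by omega, hj3, hj4⟩, ?_⟩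
            rintro j' ⟨g1, g2, g3, g4⟩
            rcases Nat.lt_or_ge j' (i+1) with h | h
            · exact hj5 j' ⟨g1, by omega, g3, g4⟩
            · exfalso
              have hje : j' = i+1 := by omega
              subst hje
              exact blk_stop hEv hvi g3
          · intro j hj1 hj2 hb
            rcases Nat.lt_or_ge j (i+1) with h | h
            · exact absurd hb (blk_stop (v := j) hEv (by omega))
            · have hje : j = i+1 := by omega
              subst hje
              exact hSv
        -- E=false, S=true, b=false : close spokeless block → fail
        · have hR : st c (i+1) = none := by rw [hsucc, hst, hEv, hSv]; rfl
          rw [hR]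
          obtain ⟨O1, O2⟩ := IH2 hst
          refine ⟨fun h => by simp at h, fun h => by simp at h, fun _ => Or.inl ⟨i, hi', by omega, ?_⟩⟩
          intro j hj1 hb
          rcases Nat.lt_or_ge j (i+1) with hj | hj
          · exact O2 j hj1 (by omega) (blk_symm hb)
          · exfalso
            have h2 := hb i (by omega) (by omega)
            rw [hEv] at h2
            exact Bool.false_ne_true h2
        -- E=false, S=true, b=true : close complete block, open new with spoke
        · have hR : st c (i+1) = some true := by rw [hsucc, hst, hEv, hSv]; rfl
          rw [hR]
          have G := IH1 hst
          refine ⟨fun _ => ?_, fun h => by simp at h, fun h => by simp at h⟩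
          intro v hv1 hv2
          rcases Nat.lt_or_ge v (i+1) with hvlt | hvge
          · have hvi : v ≤ i := by omega
            obtain ⟨j, ⟨hj1, hj2, hj3, hj4⟩, hj5⟩ := G v hv1 hvi
            refine ⟨j, ⟨hj1, by omega, hj3, hj4⟩, ?_⟩
            rintro j' ⟨g1, g2, g3, g4⟩
            rcases Nat.lt_or_ge j' (i+1) with h | h
            · exact hj5 j' ⟨g1, by omega, g3, g4⟩
            · exfalso
              have hje : j' = i+1 := by omega
              subst hje
              exact blk_stop hEv hvi g3
          · have hveq : v = i+1 := by omega
            subst hveq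
            refine ⟨i+1, ⟨by omega, le_rfl, blk_refl _ _, hSv⟩, ?_⟩
            rintro j' ⟨g1, g2, g3, g4⟩
            rcases Nat.lt_or_ge j' (i+1) with h | h
            · exact absurd (blk_symm g3) (blk_stop (v := j') hEv (by omega))
            · omega
        -- E=true, S=false, b=false : extend spokeless block
        · have hR : st c (i+1) = some false := by rw [hsucc, hst, hEv, hSv]; rfl
          rw [hR]
          obtain ⟨O1, O2⟩ := IH2 hst
          refine ⟨fun h => by simp at h, fun _ => ⟨?_, ?_⟩, fun h => by simp at h⟩
          · intro v hv1 hv2 hb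
            have hvi : v ≤ i := by
              rcases Nat.lt_or_ge v (i+1) with h | h
              · omega
              · exfalso
                have hveq : v = i+1 := by omega
                subst hveq
                exact hb (blk_refl _ _)
            have hbi : ¬ Blk c.2 v i := fun hh => hb ((blk_succ hEv v).mp hh)
            obtain ⟨j, ⟨hj1, hj2, hj3, hj4⟩, hj5⟩ := O1 v hv1 hvi hbi
            refine ⟨j, ⟨hj1, by omega, hj3, hj4⟩, ?_⟩
            rintro j' ⟨g1, g2, g3, g4⟩
            rcases Nat.lt_or_ge j' (i+1) with h | h
            · exact hj5 j' ⟨g1, by omega, g3, g4⟩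
            · exfalso
              have hje : j' = i+1 := by omega
              subst hje
              exact hb g3
          · intro j hj1 hj2 hb
            rcases Nat.lt_or_ge j (i+1) with h | h
            · exact O2 j hj1 (by omega) ((blk_succ hEv j).mpr hb)
            · have hje : j = i+1 := by omega
              subst hje
              exact hSv
        -- E=true, S=false, b=true : extend complete block
        · have hR : st c (i+1) = some true := by rw [hsucc, hst, hEv, hSv]; rfl
          rw [hR]
          have G := IH1 hst
          refine ⟨fun _ => ?_, fun h => by simp at h, fun h => by simp at h⟩
          intro v hv1 hv2
          rcases Nat.lt_or_ge v (i+1) with hvlt | hvge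
          · have hvi : v ≤ i := by omega
            obtain ⟨j, ⟨hj1, hj2, hj3, hj4⟩, hj5⟩ := G v hv1 hvi
            refine ⟨j, ⟨hj1, by omega, hj3, hj4⟩, ?_⟩
            rintro j' ⟨g1, g2, g3, g4⟩
            rcases Nat.lt_or_ge j' (i+1) with h | h
            · exact hj5 j' ⟨g1, by omega, g3, g4⟩
            · exfalso
              have hje : j' = i+1 := by omega
              subst hje
              rw [hSv] at g4
              exact Bool.false_ne_true g4
          · have hveq : v = i+1 := by omega
            subst hveq
            obtain ⟨j, ⟨hj1, hj2, hj3, hj4⟩, hj5⟩ := G i hi' le_rfl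
            have hbij : Blk c.2 (i+1) j := blk_symm ((blk_succ hEv j).mp (blk_symm hj3))
            refine ⟨j, ⟨hj1, by omega, hbij, hj4⟩, ?_⟩
            rintro j' ⟨g1, g2, g3, g4⟩
            rcases Nat.lt_or_ge j' (i+1) with h | h
            · have hb' : Blk c.2 i j' := blk_symm ((blk_succ hEv j').mpr (blk_symm g3))
              exact hj5 j' ⟨g1, by omega, hb', g4⟩
            · exfalso
              have hje : j' = i+1 := by omega
              subst hje
              rw [hSv] at g4
              exact Bool.false_ne_true g4
        -- E=true, S=true, b=false : spoke for open block
        · have hR : st c (i+1) = some true := by rw [hsucc, hst, hEv, hSv]; rfl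
          rw [hR]
          obtain ⟨O1, O2⟩ := IH2 hst
          refine ⟨fun _ => ?_, fun h => by simp at h, fun h => by simp at h⟩
          intro v hv1 hv2
          rcases Nat.lt_or_ge v (i+1) with hvlt | hvge
          · have hvi : v ≤ i := by omega
            by_cases hbv : Blk c.2 v i
            · refine ⟨i+1, ⟨by omega, le_rfl, (blk_succ hEv v).mp hbv, hSv⟩, ?_⟩
              rintro j' ⟨g1, g2, g3, g4⟩
              rcases Nat.lt_or_ge j' (i+1) with h | h
              · exfalso
                have hbj' : Blk c.2 j' i := blk_trans g3 hbv
                have hf := O2 j' g1 (by omega) hbj'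
                rw [hf] at g4
                exact Bool.false_ne_true g4
              · omega
            · obtain ⟨j, ⟨hj1, hj2, hj3, hj4⟩, hj5⟩ := O1 v hv1 hvi hbv
              refine ⟨j, ⟨hj1, by omega, hj3, hj4⟩, ?_⟩
              rintro j' ⟨g1, g2, g3, g4⟩
              rcases Nat.lt_or_ge j' (i+1) with h | h
              · exact hj5 j' ⟨g1, by omega, g3, g4⟩
              · exfalso
                have hje : j' = i+1 := by omega
                subst hje
                exact hbv ((blk_succ hEv v).mpr g3)
          · have hveq : v = i+1 := by omega
            subst hveq
            refine ⟨i+1, ⟨by omega, le_rfl, blk_refl _ _, hSv⟩, ?_⟩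
            rintro j' ⟨g1, g2, g3, g4⟩
            rcases Nat.lt_or_ge j' (i+1) with h | h
            · exfalso
              have hb' : Blk c.2 j' i := (blk_succ hEv j').mpr (blk_symm g3)
              have hf := O2 j' g1 (by omega) hb'
              rw [hf] at g4
              exact Bool.false_ne_true g4
            · omega
        -- E=true, S=true, b=true : double spoke → fail
        · have hR : st c (i+1) = none := by rw [hsucc, hst, hEv, hSv]; rfl
          rw [hR]
          have G := IH1 hst
          refine ⟨fun h => by simp at h, fun h => by simp at h, fun _ => Or.inr ?_⟩
          obtain ⟨j, ⟨hj1, hj2, hj3, hj4⟩, hj5⟩ := G i hi' le_rfl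
          refine ⟨j, i+1, hj1, by omega, le_rfl, ?_, hj4, hSv⟩
          exact (blk_succ hEv j).mp (blk_symm hj3)

theorem good_iff_st (c : Cfg) (m : ℕ) (hm : 1 ≤ m) :
    Good m c ↔ st c m = some true := by
  obtain ⟨I1, I2, I3⟩ := invariant c m hm
  constructor
  · intro hg
    rcases hst : st c m with _ | b
    · exfalso
      rcases I3 hst with ⟨v, h1, h2, h3⟩ | ⟨j, j', h1, h2, h3, h4, h5, h6⟩
      · obtain ⟨j, ⟨g1, g2, g3, g4⟩, _⟩ := hg v h1 h2
        rw [h3 j g1 g3] at g4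
        exact Bool.false_ne_true g4
      · obtain ⟨j0, _, hj0⟩ := hg j h1 (by omega)
        have e1 := hj0 j ⟨h1, by omega, blk_refl _ _, h5⟩
        have e2 := hj0 j' ⟨by omega, h3, h4, h6⟩
        omega
    · rcases b with _ | _
      · exfalso
        obtain ⟨O1, O2⟩ := I2 hst
        obtain ⟨j, ⟨g1, g2, g3, g4⟩, _⟩ := hg m hm le_rfl
        rw [O2 j g1 g2 (blk_symm g3)] at g4
        exact Bool.false_ne_true g4
      · rfl
  · exact I1

/-! ### Counting -/

def suppC (i : ℕ) (c : Cfg) : Prop :=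
  (∀ k, k = 0 ∨ i < k → c.1 k = false) ∧ (∀ k, k = 0 ∨ i ≤ k → c.2 k = false)

instance suppFinite (i : ℕ) (P : Cfg → Prop) :
    Finite {c : Cfg // suppC i c ∧ P c} := by
  have : Function.Injective
      (fun c : {c : Cfg // suppC i c ∧ P c} =>
        ((fun k : Fin (i+1) => c.1.1 k, fun k : Fin (i+1) => c.1.2 k) :
          (Fin (i+1) → Bool) × (Fin (i+1) → Bool))) := by
    rintro ⟨⟨s, e⟩, hs, _⟩ ⟨⟨s', e'⟩, hs', _⟩ h
    simp only [Prod.mk.injEq] at h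
    obtain ⟨h1, h2⟩ := h
    refine Subtype.ext (Prod.ext ?_ ?_) <;> funext k
    · rcases Nat.lt_or_ge k (i+1) with hk | hk
      · exact congrFun h1 ⟨k, hk⟩
      · rw [hs.1 k (by omega), hs'.1 k (by omega)]
    · rcases Nat.lt_or_ge k (i+1) with hk | hk
      · exact congrFun h2 ⟨k, hk⟩
      · rcases Nat.eq_zero_or_pos k with rfl | _
        · rw [hs.2 0 (by omega), hs'.2 0 (by omega)]
        · rw [hs.2 k (by omega), hs'.2 k (by omega)]
  exact Finite.of_injective _ this

/-- truncation: forget coordinates `s (i+1)` and `e i` -/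
def trunc (i : ℕ) (c : Cfg) : Cfg :=
  (fun k => if k = i+1 then false else c.1 k, fun k => if k = i then false else c.2 k)

def extC (i : ℕ) (a b : Bool) (c : Cfg) : Cfg :=
  (fun k => if k = i+1 then b else c.1 k, fun k => if k = i then a else c.2 k)

lemma st_trunc (i : ℕ) (hi : 1 ≤ i) (c : Cfg) : st (trunc i c) i = st c i := by
  apply st_congr
  · intro k h1 h2
    simp only [trunc]
    rw [if_neg (by omega)]
  · intro k h1 h2
    simp only [trunc]
    rw [if_neg (by omega)]

lemma st_extC (i : ℕ) (hi : 1 ≤ i) (a b : Bool) (c : Cfg) :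
    st (extC i a b c) i = st c i := by
  apply st_congr
  · intro k h1 h2
    simp only [extC]
    rw [if_neg (by omega)]
  · intro k h1 h2
    simp only [extC]
    rw [if_neg (by omega)]

/-- the main counting step equivalence, for fixed last-bits `(a, b)` -/
def stepEquiv (i : ℕ) (hi : 1 ≤ i) (a b : Bool) (q : Option Bool) :
    {c : Cfg // (suppC (i+1) c ∧ st c (i+1) = q) ∧ (c.2 i = a ∧ c.1 (i+1) = b)} ≃
    {c : Cfg // suppC i c ∧ step (st c i) a b = q} where
  toFun x := ⟨trunc i x.1, by
    obtain ⟨⟨⟨hs, he⟩, hst⟩, ha, hb⟩ := x.2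
    refine ⟨⟨?_, ?_⟩, ?_⟩
    · intro k hk
      simp only [trunc]
      rcases eq_or_ne k (i+1) with rfl | hne
      · rw [if_pos rfl]
      · rw [if_neg hne]; exact hs k (by omega)
    · intro k hk
      simp only [trunc]
      rcases eq_or_ne k i with rfl | hne
      · rw [if_pos rfl]
      · rw [if_neg hne]; exact he k (by omega)
    · rw [st_trunc i hi]
      rw [st_succ _ hi, ha, hb] at hst
      exact hst⟩
  invFun x := ⟨extC i a b x.1, by
    obtain ⟨⟨hs, he⟩, hst⟩ := x.2
    refine ⟨⟨⟨?_, ?_⟩, ?_⟩, ?_, ?_⟩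
    · intro k hk
      simp only [extC]
      rw [if_neg (by omega)]
      exact hs k (by omega)
    · intro k hk
      simp only [extC]
      rw [if_neg (by omega)]
      exact he k (by omega)
    · rw [st_succ _ hi]
      have h1 : (extC i a b x.1).2 i = a := by simp [extC]
      have h2 : (extC i a b x.1).1 (i+1) = b := by simp [extC]
      rw [h1, h2, st_extC i hi]
      exact hst
    · simp [extC]
    · simp [extC]⟩
  left_inv x := by
    obtain ⟨⟨⟨hs, he⟩, hst⟩, ha, hb⟩ := x.2
    refine Subtype.ext (Prod.ext ?_ ?_) <;> funext k
    · simp only [extC, trunc]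
      rcases eq_or_ne k (i+1) with rfl | hne
      · rw [if_pos rfl, hb]
      · rw [if_neg hne, if_neg hne]
    · simp only [extC, trunc]
      rcases eq_or_ne k i with rfl | hne
      · rw [if_pos rfl, ha]
      · rw [if_neg hne, if_neg hne]
  right_inv x := by
    obtain ⟨⟨hs, he⟩, hst⟩ := x.2
    refine Subtype.ext (Prod.ext ?_ ?_) <;> funext k
    · simp only [extC, trunc]
      rcases eq_or_ne k (i+1) with rfl | hne
      · rw [if_pos rfl, hs (i+1) (by omega)]
      · rw [if_neg hne, if_neg hne]
    · simp only [extC, trunc]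
      rcases eq_or_ne k i with rfl | hne
      · rw [if_pos rfl, he _ (by omega)]
      · rw [if_neg hne, if_neg hne]

lemma nat_card_sigma {ι : Type} [Fintype ι] (f : ι → Type) [∀ i, Finite (f i)] :
    Nat.card (Σ i, f i) = ∑ i, Nat.card (f i) := by
  letI := fun i => Fintype.ofFinite (f i)
  simp [Nat.card_eq_fintype_card]

lemma card_split (i : ℕ) (hi : 1 ≤ i) (q : Option Bool) :
    Nat.card {c : Cfg // suppC (i+1) c ∧ st c (i+1) = q} =
      ∑ ab : Bool × Bool, Nat.card {c : Cfg // suppC i c ∧ step (st c i) ab.1 ab.2 = q} := by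
  have e1 : {c : Cfg // suppC (i+1) c ∧ st c (i+1) = q} ≃
      Σ ab : Bool × Bool, {c : Cfg //
        (suppC (i+1) c ∧ st c (i+1) = q) ∧ (c.2 i = ab.1 ∧ c.1 (i+1) = ab.2)} := by
    refine (Equiv.sigmaFiberEquiv
      (fun x : {c : Cfg // suppC (i+1) c ∧ st c (i+1) = q} => ((x.1.2 i, x.1.1 (i+1)) : Bool × Bool))).symm.trans ?_
    refine Equiv.sigmaCongrRight fun ab => ?_
    refine (Equiv.subtypeSubtypeEquivSubtypeInter
      (fun c : Cfg => suppC (i+1) c ∧ st c (i+1) = q)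
      (fun c : Cfg => (c.2 i, c.1 (i+1)) = ab)).trans (Equiv.subtypeEquivRight ?_)
    intro c
    simp [Prod.ext_iff]
  have e2 : ∀ ab : Bool × Bool, {c : Cfg //
        (suppC (i+1) c ∧ st c (i+1) = q) ∧ (c.2 i = ab.1 ∧ c.1 (i+1) = ab.2)} ≃
      {c : Cfg // suppC i c ∧ step (st c i) ab.1 ab.2 = q} :=
    fun ab => stepEquiv i hi ab.1 ab.2 q
  rw [Nat.card_congr (e1.trans (Equiv.sigmaCongrRight e2))]
  exact nat_card_sigma _

lemma step_tt_t (y : Option Bool) : step y true true = some true ↔ y = some false := by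
  rcases y with _ | b
  · simp [step]
  · cases b <;> simp [step]

lemma step_tf_t (y : Option Bool) : step y true false = some true ↔ y = some true := by
  rcases y with _ | b
  · simp [step]
  · cases b <;> simp [step]

lemma step_ft_t (y : Option Bool) : step y false true = some true ↔ y = some true := by
  rcases y with _ | b
  · simp [step]
  · cases b <;> simp [step]

lemma step_ff_t (y : Option Bool) : ¬ (step y false false = some true) := by
  rcases y with _ | b
  · simp [step]
  · cases b <;> simp [step]

lemma step_tt_f (y : Option Bool) : ¬ (step y true true = some false) := by
  rcases y with _ | b
  · simp [step]
  · cases b <;> simp [step]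

lemma step_tf_f (y : Option Bool) : step y true false = some false ↔ y = some false := by
  rcases y with _ | b
  · simp [step]
  · cases b <;> simp [step]

lemma step_ft_f (y : Option Bool) : ¬ (step y false true = some false) := by
  rcases y with _ | b
  · simp [step]
  · cases b <;> simp [step]

lemma step_ff_f (y : Option Bool) : step y false false = some false ↔ y = some true := by
  rcases y with _ | b
  · simp [step]
  · cases b <;> simp [step]

lemma card_st_main (i : ℕ) (hi : 1 ≤ i) :
    Nat.card {c : Cfg // suppC i c ∧ st c i = some true} = Nat.fib (2*i) ∧
    Nat.card {c : Cfg // suppC i c ∧ st c i = some false} = Nat.fib (2*i - 1) := by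
  induction i, hi using Nat.le_induction with
  | base =>
    have base : ∀ q : Bool, Nat.card {c : Cfg // suppC 1 c ∧ st c 1 = some q} = 1 := by
      intro q
      rw [Nat.card_eq_one_iff_unique]
      constructor
      · constructor
        rintro ⟨⟨s, e⟩, ⟨hs, he⟩, h1⟩ ⟨⟨s', e'⟩, ⟨hs', he'⟩, h1'⟩
        have g1 : s 1 = q := by simpa [st] using h1
        have g1' : s' 1 = q := by simpa [st] using h1'
        refine Subtype.ext (Prod.ext ?_ ?_) <;> funext k
        · rcases eq_or_ne k 1 with rfl | hne
          · show s 1 = s' 1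
            rw [g1, g1']
          · rw [hs k (by omega), hs' k (by omega)]
        · rw [he k (by omega), he' k (by omega)]
      · refine ⟨⟨(fun k => if k = 1 then q else false, fun _ => false), ⟨?_, ?_⟩, ?_⟩⟩
        · intro k hk
          simp only []
          rw [if_neg (by omega)]
        · intro k _
          rfl
        · show some (if 1 = 1 then q else false) = some q
          rw [if_pos rfl]
    exact ⟨base true, base false⟩
  | succ i hi ih =>
    obtain ⟨ihX, ihY⟩ := ih
    have hX : Nat.card {c : Cfg // suppC (i+1) c ∧ st c (i+1) = some true} =
        2 * Nat.fib (2*i) + Nat.fib (2*i - 1) := by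
      rw [card_split i hi]
      rw [Fintype.sum_prod_type]
      simp only [Fintype.sum_bool]
      have c1 : Nat.card {c : Cfg // suppC i c ∧ step (st c i) true true = some true} =
          Nat.fib (2*i - 1) := by
        rw [Nat.card_congr (Equiv.subtypeEquivRight fun c => by rw [and_congr_right_iff]; intro _; rw [step_tt_t])]
        exact ihY
      have c2 : Nat.card {c : Cfg // suppC i c ∧ step (st c i) true false = some true} =
          Nat.fib (2*i) := by
        rw [Nat.card_congr (Equiv.subtypeEquivRight fun c => by rw [and_congr_right_iff]; intro _; rw [step_tf_t])]
        exact ihX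
      have c3 : Nat.card {c : Cfg // suppC i c ∧ step (st c i) false true = some true} =
          Nat.fib (2*i) := by
        rw [Nat.card_congr (Equiv.subtypeEquivRight fun c => by rw [and_congr_right_iff]; intro _; rw [step_ft_t])]
        exact ihX
      have c4 : Nat.card {c : Cfg // suppC i c ∧ step (st c i) false false = some true} = 0 := by
        have : IsEmpty {c : Cfg // suppC i c ∧ step (st c i) false false = some true} := by
          constructor
          rintro ⟨c, _, h⟩
          exact step_ff_t _ h
        exact Nat.card_of_isEmpty
      rw [c1, c2, c3, c4]
      ring
    have hY : Nat.card {c : Cfg // suppC (i+1) c ∧ st c (i+1) = some false} =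
        Nat.fib (2*i) + Nat.fib (2*i - 1) := by
      rw [card_split i hi]
      rw [Fintype.sum_prod_type]
      simp only [Fintype.sum_bool]
      have c1 : Nat.card {c : Cfg // suppC i c ∧ step (st c i) true true = some false} = 0 := by
        have : IsEmpty {c : Cfg // suppC i c ∧ step (st c i) true true = some false} := by
          constructor
          rintro ⟨c, _, h⟩
          exact step_tt_f _ h
        exact Nat.card_of_isEmpty
      have c2 : Nat.card {c : Cfg // suppC i c ∧ step (st c i) true false = some false} =
          Nat.fib (2*i - 1) := by
        rw [Nat.card_congr (Equiv.subtypeEquivRight fun c => by rw [and_congr_right_iff]; intro _; rw [step_tf_f])]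
        exact ihY
      have c3 : Nat.card {c : Cfg // suppC i c ∧ step (st c i) false true = some false} = 0 := by
        have : IsEmpty {c : Cfg // suppC i c ∧ step (st c i) false true = some false} := by
          constructor
          rintro ⟨c, _, h⟩
          exact step_ft_f _ h
        exact Nat.card_of_isEmpty
      have c4 : Nat.card {c : Cfg // suppC i c ∧ step (st c i) false false = some false} =
          Nat.fib (2*i) := by
        rw [Nat.card_congr (Equiv.subtypeEquivRight fun c => by rw [and_congr_right_iff]; intro _; rw [step_ff_f])]
        exact ihX
      rw [c1, c2, c3, c4]
      ring
    constructor
    · rw [hX]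
      have h1 : 2*(i+1) = (2*i - 1) + 3 := by omega
      have h2 : 2*i = (2*i - 1) + 1 := by omega
      rw [h1]
      rw [show (2*i-1) + 3 = ((2*i-1) + 1) + 2 from rfl, Nat.fib_add_two,
        show (2*i-1) + 1 + 1 = (2*i - 1) + 2 from rfl, Nat.fib_add_two, ← h2]
      omega
    · rw [hY]
      have h2 : 2*i = (2*i - 1) + 1 := by omega
      rw [show 2*(i+1) - 1 = (2*i - 1) + 2 from by omega, Nat.fib_add_two, ← h2]
      omega

/-! ### Graphs -/

def decode (n : ℕ) (c : Cfg) : SimpleGraph (Fin n) :=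
  SimpleGraph.fromRel (fun a b =>
    ((a : ℕ) = 0 ∧ c.1 (b : ℕ) = true) ∨ ((b : ℕ) = (a : ℕ) + 1 ∧ c.2 (a : ℕ) = true))

lemma decode_adj (n : ℕ) (c : Cfg) (a b : Fin n) :
    (decode n c).Adj a b ↔ a ≠ b ∧
      (((a : ℕ) = 0 ∧ c.1 (b : ℕ) = true) ∨ ((b : ℕ) = (a : ℕ) + 1 ∧ c.2 (a : ℕ) = true) ∨
       ((b : ℕ) = 0 ∧ c.1 (a : ℕ) = true) ∨ ((a : ℕ) = (b : ℕ) + 1 ∧ c.2 (b : ℕ) = true)) := by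
  rw [decode, SimpleGraph.fromRel_adj]
  tauto

lemma walls {V : Type*} {G : SimpleGraph V} (W : V → Prop)
    (h : ∀ a b, G.Adj a b → (W a ↔ W b)) {a b : V} (hr : G.Reachable a b) :
    W a ↔ W b := by
  obtain ⟨p⟩ := hr
  induction p with
  | nil => rfl
  | cons hadj _ ih => exact (h _ _ hadj).trans ih

lemma reach_chain {V : Type*} {G : SimpleGraph V} (f : ℕ → V) {i j : ℕ} (hij : i ≤ j)
    (h : ∀ k, i ≤ k → k < j → G.Adj (f k) (f (k+1))) : G.Reachable (f i) (f j) := by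
  induction j, hij using Nat.le_induction with
  | base => exact SimpleGraph.Reachable.refl _
  | succ j hij ih =>
    exact (ih (fun k hk1 hk2 => h k hk1 (by omega))).trans (h j hij (by omega)).reachable

def fv {n : ℕ} (hn : 2 ≤ n) (k : ℕ) : Fin n := ⟨k % n, Nat.mod_lt _ (by omega)⟩

lemma fv_val {n : ℕ} (hn : 2 ≤ n) {k : ℕ} (hk : k < n) : ((fv hn k : Fin n) : ℕ) = k :=
  Nat.mod_eq_of_lt hk

lemma fv_self {n : ℕ} (hn : 2 ≤ n) (v : Fin n) : fv hn (v : ℕ) = v :=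
  Fin.ext (fv_val hn v.isLt)

section Graph

variable {n : ℕ} (hn : 2 ≤ n) (c : Cfg)

lemma chain_adj (hc0 : c.2 0 = false) {i j : ℕ} (hj : j ≤ n - 1) (hb : Blk c.2 i j)
    (hi : i ≤ n - 1)
    {G' : SimpleGraph (Fin n)}
    (hle : ∀ a b : Fin n, (decode n c).Adj a b → 1 ≤ (a : ℕ) → 1 ≤ (b : ℕ) → G'.Adj a b) :
    G'.Reachable (fv hn i) (fv hn j) := by
  have key : ∀ k, min i j ≤ k → k < max i j → G'.Adj (fv hn k) (fv hn (k+1)) := by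
    intro k h1 h2
    have hk : k < n - 1 := by omega
    have hv1 : ((fv hn k : Fin n) : ℕ) = k := fv_val hn (by omega)
    have hv2 : ((fv hn (k+1) : Fin n) : ℕ) = k + 1 := fv_val hn (by omega)
    have hek : c.2 k = true := hb k h1 h2
    have hk1 : 1 ≤ k := by
      by_contra h
      have : k = 0 := by omega
      rw [this, hc0] at hek
      exact Bool.false_ne_true hek
    have hadj : (decode n c).Adj (fv hn k) (fv hn (k+1)) := by
      rw [decode_adj]
      refine ⟨fun h => by rw [h] at hv1; omega, Or.inr (Or.inl ⟨by omega, ?_⟩)⟩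
      rw [hv1]; exact hek
    exact hle _ _ hadj (by omega) (by omega)
  rcases le_total i j with h | h
  · have := reach_chain (fv hn) h (fun k h1 h2 => key k (by omega) (by omega))
    exact this
  · exact (reach_chain (fv hn) h (fun k h1 h2 => key k (by omega) (by omega))).symm

lemma decode_le_fan : decode n c ≤ fanGraph n := by
  intro a b hab
  rw [decode_adj] at hab
  obtain ⟨hne, h⟩ := hab
  rw [fanGraph, SimpleGraph.fromRel_adj]
  refine ⟨hne, ?_⟩
  rcases h with ⟨h1, _⟩ | ⟨h1, _⟩ | ⟨h1, _⟩ | ⟨h1, _⟩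
  · exact Or.inl (Or.inl h1)
  · rcases Nat.eq_zero_or_pos (a : ℕ) with h0 | h0
    · exact Or.inl (Or.inl h0)
    · exact Or.inl (Or.inr ⟨by omega, h1⟩)
  · exact Or.inr (Or.inl h1)
  · rcases Nat.eq_zero_or_pos (b : ℕ) with h0 | h0
    · exact Or.inr (Or.inl h0)
    · exact Or.inr (Or.inr ⟨by omega, h1⟩)


include hn in
lemma spoke_bridge (hc0 : c.2 0 = false) (hg : Good (n-1) c) (v w : Fin n)
    (hv0 : (v : ℕ) = 0) (hsw : c.1 (w : ℕ) = true) (hne : v ≠ w)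
    (hreach : ((decode n c) \ SimpleGraph.fromEdgeSet {s(v, w)}).Reachable v w) : False := by
  have hw0 : (w : ℕ) ≠ 0 := by
    intro h
    exact hne (Fin.ext (by omega))
  set W : Fin n → Prop := fun u => (u : ℕ) ≠ 0 ∧ Blk c.2 (w : ℕ) (u : ℕ) with hW
  have hclosed : ∀ a b : Fin n,
      ((decode n c) \ SimpleGraph.fromEdgeSet {s(v, w)}).Adj a b → (W a ↔ W b) := by
    intro a b hab
    rw [SimpleGraph.sdiff_adj, SimpleGraph.fromEdgeSet_adj] at hab
    obtain ⟨hdec, hnot⟩ := hab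
    rw [decode_adj] at hdec
    obtain ⟨hab_ne, hrel⟩ := hdec
    have hedge : ¬ s(a, b) = s(v, w) := fun h => hnot ⟨by simp [h], hab_ne⟩
    have huniq : ∀ y : Fin n, (y : ℕ) ≠ 0 → Blk c.2 (w : ℕ) (y : ℕ) → c.1 (y : ℕ) = true →
        y = w := by
      intro y hy0 hyb hys
      obtain ⟨j, _, hjU⟩ := hg (w : ℕ) (by omega) (by omega)
      have e1 := hjU (y : ℕ) ⟨by omega, by have := y.isLt; omega, hyb, hys⟩
      have e2 := hjU (w : ℕ) ⟨by omega, by have := w.isLt; omega, blk_refl _ _, hsw⟩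
      exact Fin.ext (by omega)
    rcases hrel with ⟨h1, h2⟩ | ⟨h1, h2⟩ | ⟨h1, h2⟩ | ⟨h1, h2⟩
    · refine iff_of_false (fun hWa => hWa.1 h1) (fun hWb => ?_)
      have hbw : b = w := huniq b hWb.1 hWb.2 h2
      have hav : a = v := Fin.ext (by omega)
      exact hedge (by rw [hbw, hav])
    · have ha1 : 1 ≤ (a : ℕ) := by
        rcases Nat.eq_zero_or_pos (a : ℕ) with h0 | h0
        · rw [h0, hc0] at h2; exact absurd h2 Bool.false_ne_true
        · omega
      constructor
      · rintro ⟨g1, g2⟩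
        exact ⟨by omega, by rw [h1]; exact (blk_succ h2 _).mp g2⟩
      · rintro ⟨g1, g2⟩
        rw [h1] at g2
        exact ⟨by omega, (blk_succ h2 _).mpr g2⟩
    · refine iff_of_false (fun hWa => ?_) (fun hWb => hWb.1 h1)
      have haw : a = w := huniq a hWa.1 hWa.2 h2
      have hbv : b = v := Fin.ext (by omega)
      exact hedge (by rw [haw, hbv, Sym2.eq_swap])
    · have hb1 : 1 ≤ (b : ℕ) := by
        rcases Nat.eq_zero_or_pos (b : ℕ) with h0 | h0
        · rw [h0, hc0] at h2; exact absurd h2 Bool.false_ne_true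
        · omega
      constructor
      · rintro ⟨g1, g2⟩
        rw [h1] at g2
        exact ⟨by omega, (blk_succ h2 _).mpr g2⟩
      · rintro ⟨g1, g2⟩
        exact ⟨by omega, by rw [h1]; exact (blk_succ h2 _).mp g2⟩
  have := (walls W hclosed hreach).mpr ⟨hw0, blk_refl _ _⟩
  exact this.1 hv0

include hn in
lemma path_bridge (hc0 : c.2 0 = false) (hg : Good (n-1) c) (v w : Fin n)
    (hw : (w : ℕ) = (v : ℕ) + 1) (hev : c.2 (v : ℕ) = true)
    (hreach : ((decode n c) \ SimpleGraph.fromEdgeSet {s(v, w)}).Reachable v w) : False := by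
  set a := (v : ℕ) with hadef
  have ha1 : 1 ≤ a := by
    rcases Nat.eq_zero_or_pos a with h0 | h0
    · rw [h0, hc0] at hev; exact absurd hev Bool.false_ne_true
    · omega
  have han : a + 1 ≤ n - 1 := by have := w.isLt; omega
  have hblk_a : Blk c.2 a (a+1) := by
    intro k h1 h2
    have hk : k = a := by omega
    rw [hk]; exact hev
  obtain ⟨j, ⟨hj1, hj2, hj3, hj4⟩, hjU⟩ := hg a ha1 (by omega)
  -- x ≠ a for any non-deleted path edge (x, x+1)
  have hne_xa : ∀ x y : Fin n, (y : ℕ) = (x : ℕ) + 1 → ¬ s(x, y) = s(v, w) →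
      (x : ℕ) ≠ a := by
    intro x y h1 hedge hxa
    exact hedge (by rw [show x = v from Fin.ext hxa, show y = w from Fin.ext (by omega)])
  rcases le_or_gt j a with hj | hj
  · -- spoke on left side; right part [a+1, …] is cut off
    set W : Fin n → Prop := fun u => a + 1 ≤ (u : ℕ) ∧ Blk c.2 (a+1) (u : ℕ) with hW
    have hclosed : ∀ x y : Fin n,
        ((decode n c) \ SimpleGraph.fromEdgeSet {s(v, w)}).Adj x y → (W x ↔ W y) := by
      intro x y hab
      rw [SimpleGraph.sdiff_adj, SimpleGraph.fromEdgeSet_adj] at hab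
      obtain ⟨hdec, hnot⟩ := hab
      rw [decode_adj] at hdec
      obtain ⟨hab_ne, hrel⟩ := hdec
      have hedge : ¬ s(x, y) = s(v, w) := fun h => hnot ⟨by simp [h], hab_ne⟩
      have hspoke_no : ∀ y' : Fin n, c.1 (y' : ℕ) = true → ¬ W y' := by
        rintro y' hsy' ⟨g1, g2⟩
        have hcand := hjU (y' : ℕ)
          ⟨by omega, by have := y'.isLt; omega, blk_trans (blk_symm hblk_a) g2, hsy'⟩
        omega
      rcases hrel with ⟨h1, h2⟩ | ⟨h1, h2⟩ | ⟨h1, h2⟩ | ⟨h1, h2⟩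
      · exact iff_of_false (fun hWx => by omega) (hspoke_no y h2)
      · have hx1 : 1 ≤ (x : ℕ) := by
          rcases Nat.eq_zero_or_pos (x : ℕ) with h0 | h0
          · rw [h0, hc0] at h2; exact absurd h2 Bool.false_ne_true
          · omega
        have hxa : (x : ℕ) ≠ a := hne_xa x y h1 hedge
        rcases lt_or_ge (x : ℕ) a with hlt | hge
        · refine iff_of_false (fun hWx => by omega) (fun hWy => by omega)
        · have hge' : a + 1 ≤ (x : ℕ) := by omega
          constructor
          · rintro ⟨g1, g2⟩
            exact ⟨by omega, by rw [h1]; exact (blk_succ h2 _).mp g2⟩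
          · rintro ⟨g1, g2⟩
            rw [h1] at g2
            exact ⟨by omega, (blk_succ h2 _).mpr g2⟩
      · exact iff_of_false (hspoke_no x h2) (fun hWy => by omega)
      · have hy1 : 1 ≤ (y : ℕ) := by
          rcases Nat.eq_zero_or_pos (y : ℕ) with h0 | h0
          · rw [h0, hc0] at h2; exact absurd h2 Bool.false_ne_true
          · omega
        have hya : (y : ℕ) ≠ a := hne_xa y x h1 (fun h => hedge (by rw [← Sym2.eq_swap, h]))
        rcases lt_or_ge (y : ℕ) a with hlt | hge
        · refine iff_of_false (fun hWx => by omega) (fun hWy => by omega)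
        · constructor
          · rintro ⟨g1, g2⟩
            rw [h1] at g2
            exact ⟨by omega, (blk_succ h2 _).mpr g2⟩
          · rintro ⟨g1, g2⟩
            exact ⟨by omega, by rw [h1]; exact (blk_succ h2 _).mp g2⟩
    have := (walls W hclosed hreach).mpr ⟨by omega, by rw [hw]; exact blk_refl _ _⟩
    omega
  · -- spoke on right side; left part [.., a] is cut off
    set W : Fin n → Prop := fun u => 1 ≤ (u : ℕ) ∧ (u : ℕ) ≤ a ∧ Blk c.2 (u : ℕ) a with hW
    have hclosed : ∀ x y : Fin n,
        ((decode n c) \ SimpleGraph.fromEdgeSet {s(v, w)}).Adj x y → (W x ↔ W y) := by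
      intro x y hab
      rw [SimpleGraph.sdiff_adj, SimpleGraph.fromEdgeSet_adj] at hab
      obtain ⟨hdec, hnot⟩ := hab
      rw [decode_adj] at hdec
      obtain ⟨hab_ne, hrel⟩ := hdec
      have hedge : ¬ s(x, y) = s(v, w) := fun h => hnot ⟨by simp [h], hab_ne⟩
      have hspoke_no : ∀ y' : Fin n, c.1 (y' : ℕ) = true → ¬ W y' := by
        rintro y' hsy' ⟨g1, g2, g3⟩
        have hcand := hjU (y' : ℕ) ⟨by omega, by omega, blk_symm g3, hsy'⟩
        omega
      rcases hrel with ⟨h1, h2⟩ | ⟨h1, h2⟩ | ⟨h1, h2⟩ | ⟨h1, h2⟩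
      · exact iff_of_false (fun hWx => by omega) (hspoke_no y h2)
      · have hx1 : 1 ≤ (x : ℕ) := by
          rcases Nat.eq_zero_or_pos (x : ℕ) with h0 | h0
          · rw [h0, hc0] at h2; exact absurd h2 Bool.false_ne_true
          · omega
        have hxa : (x : ℕ) ≠ a := hne_xa x y h1 hedge
        rcases lt_or_ge (x : ℕ) a with hlt | hge
        · constructor
          · rintro ⟨g1, g2, g3⟩
            refine ⟨by omega, by omega, ?_⟩
            rw [h1]
            exact blk_symm ((blk_succ h2 _).mp (blk_symm g3))
          · rintro ⟨g1, g2, g3⟩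
            rw [h1] at g3
            exact ⟨by omega, by omega, blk_symm ((blk_succ h2 _).mpr (blk_symm g3))⟩
        · refine iff_of_false (fun hWx => by omega) (fun hWy => by omega)
      · exact iff_of_false (hspoke_no x h2) (fun hWy => by omega)
      · have hy1 : 1 ≤ (y : ℕ) := by
          rcases Nat.eq_zero_or_pos (y : ℕ) with h0 | h0
          · rw [h0, hc0] at h2; exact absurd h2 Bool.false_ne_true
          · omega
        have hya : (y : ℕ) ≠ a := hne_xa y x h1 (fun h => hedge (by rw [← Sym2.eq_swap, h]))
        rcases lt_or_ge (y : ℕ) a with hlt | hge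
        · constructor
          · rintro ⟨g1, g2, g3⟩
            rw [h1] at g3
            exact ⟨by omega, by omega, blk_symm ((blk_succ h2 _).mpr (blk_symm g3))⟩
          · rintro ⟨g1, g2, g3⟩
            refine ⟨by omega, by omega, ?_⟩
            rw [h1]
            exact blk_symm ((blk_succ h2 _).mp (blk_symm g3))
        · refine iff_of_false (fun hWx => by omega) (fun hWy => by omega)
    have hWv : W v := ⟨ha1, le_rfl, blk_refl _ _⟩
    have := (walls W hclosed hreach).mp hWv
    omega

include hn in
theorem tree_of_good (hc0 : c.2 0 = false) (hg : Good (n-1) c) :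
    (decode n c).IsTree := by
  have hfv0 : ((fv hn 0 : Fin n) : ℕ) = 0 := fv_val hn (by omega)
  constructor
  · -- connected
    rw [SimpleGraph.connected_iff]
    refine ⟨fun u v => ?_, ⟨fv hn 0⟩⟩
    -- enough: everything reachable to hub
    suffices h : ∀ w : Fin n, (decode n c).Reachable w (fv hn 0) by
      exact (h u).trans (h v).symm
    intro w
    rcases Nat.eq_zero_or_pos (w : ℕ) with h0 | h0
    · have : w = fv hn 0 := by
        apply Fin.ext
        rw [hfv0, h0]
      rw [this]
    · obtain ⟨j, ⟨hj1, hj2, hj3, hj4⟩, _⟩ := hg (w : ℕ) h0 (by omega)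
      have hr1 : (decode n c).Reachable (fv hn (w : ℕ)) (fv hn j) :=
        chain_adj hn c hc0 (by omega) hj3 (by omega) (fun a b h _ _ => h)
      have hr2 : (decode n c).Adj (fv hn j) (fv hn 0) := by
        rw [decode_adj]
        constructor
        · intro h
          have := congrArg (fun x : Fin n => (x : ℕ)) h
          simp only [fv_val hn (show j < n by omega), hfv0] at this
          omega
        · refine Or.inr (Or.inr (Or.inl ⟨hfv0, ?_⟩))
          rw [fv_val hn (show j < n by omega)]
          exact hj4
      rw [fv_self hn w] at hr1
      exact hr1.trans hr2.reachable
  · -- acyclic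
    rw [SimpleGraph.isAcyclic_iff_forall_adj_isBridge]
    intro v w hadj
    rw [SimpleGraph.isBridge_iff]
    intro hreach
    -- analyze edge type
    have hadj' := hadj
    rw [decode_adj] at hadj'
    obtain ⟨hne, hrel⟩ := hadj'
    rcases hrel with ⟨h1, h2⟩ | ⟨h1, h2⟩ | ⟨h1, h2⟩ | ⟨h1, h2⟩
    · exact spoke_bridge hn c hc0 hg v w h1 h2 hne hreach
    · exact path_bridge hn c hc0 hg v w h1 h2 hreach
    · refine spoke_bridge hn c hc0 hg w v h1 h2 (Ne.symm hne) ?_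
      rw [Sym2.eq_swap]
      exact hreach.symm
    · refine path_bridge hn c hc0 hg w v h1 h2 ?_
      rw [Sym2.eq_swap]
      exact hreach.symm

include hn in
theorem good_of_tree (hc0 : c.2 0 = false) (ht : (decode n c).IsTree) : Good (n-1) c := by
  obtain ⟨htc, hta⟩ := (SimpleGraph.isTree_iff _).mp ht
  intro i hi1 hi2
  have hex : ∃ j, 1 ≤ j ∧ j ≤ n-1 ∧ Blk c.2 i j ∧ c.1 j = true := by
    by_contra hno
    push_neg at hno
    set W : Fin n → Prop := fun u => (u : ℕ) ≠ 0 ∧ Blk c.2 i (u : ℕ) with hWdef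
    have hclosed : ∀ a b : Fin n, (decode n c).Adj a b → (W a ↔ W b) := by
      intro a b hab
      rw [decode_adj] at hab
      obtain ⟨hab_ne, hrel⟩ := hab
      have hspoke_no : ∀ y : Fin n, c.1 (y : ℕ) = true → ¬ W y := by
        rintro y hsy ⟨g1, g2⟩
        exact (hno (y : ℕ) (by omega) (by have := y.isLt; omega) g2) hsy
      rcases hrel with ⟨h1, h2⟩ | ⟨h1, h2⟩ | ⟨h1, h2⟩ | ⟨h1, h2⟩
      · exact iff_of_false (fun hWx => hWx.1 h1) (hspoke_no b h2)
      · have hx1 : 1 ≤ (a : ℕ) := by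
          rcases Nat.eq_zero_or_pos (a : ℕ) with h0 | h0
          · rw [h0, hc0] at h2; exact absurd h2 Bool.false_ne_true
          · omega
        constructor
        · rintro ⟨g1, g2⟩
          exact ⟨by omega, by rw [h1]; exact (blk_succ h2 _).mp g2⟩
        · rintro ⟨g1, g2⟩
          rw [h1] at g2
          exact ⟨by omega, (blk_succ h2 _).mpr g2⟩
      · exact iff_of_false (hspoke_no a h2) (fun hWy => hWy.1 h1)
      · have hy1 : 1 ≤ (b : ℕ) := by
          rcases Nat.eq_zero_or_pos (b : ℕ) with h0 | h0
          · rw [h0, hc0] at h2; exact absurd h2 Bool.false_ne_true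
          · omega
        constructor
        · rintro ⟨g1, g2⟩
          rw [h1] at g2
          exact ⟨by omega, (blk_succ h2 _).mpr g2⟩
        · rintro ⟨g1, g2⟩
          exact ⟨by omega, by rw [h1]; exact (blk_succ h2 _).mp g2⟩
    have hreach : (decode n c).Reachable (fv hn i) (fv hn 0) := htc.preconnected _ _
    have hWi : W (fv hn i) := by
      constructor
      · rw [fv_val hn (show i < n by omega)]; omega
      · rw [fv_val hn (show i < n by omega)]; exact blk_refl _ _
    have hW0 := (walls W hclosed hreach).mp hWi
    exact hW0.1 (fv_val hn (by omega))
  obtain ⟨j, hj1, hj2, hj3, hj4⟩ := hex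
  refine ⟨j, ⟨hj1, hj2, hj3, hj4⟩, ?_⟩
  rintro j' ⟨g1, g2, g3, g4⟩
  by_contra hne
  have hblk : Blk c.2 j' j := blk_trans g3 hj3
  have hvj : ((fv hn j : Fin n) : ℕ) = j := fv_val hn (by omega)
  have hvj' : ((fv hn j' : Fin n) : ℕ) = j' := fv_val hn (by omega)
  have hv0 : ((fv hn 0 : Fin n) : ℕ) = 0 := fv_val hn (by omega)
  have hadj : (decode n c).Adj (fv hn 0) (fv hn j) := by
    rw [decode_adj]
    refine ⟨fun h => by rw [h] at hv0; omega, Or.inl ⟨hv0, by rw [hvj]; exact hj4⟩⟩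
  have hbridge := (SimpleGraph.isAcyclic_iff_forall_adj_isBridge.mp hta) hadj
  rw [SimpleGraph.isBridge_iff] at hbridge
  apply hbridge
  have hstep1 : ((decode n c) \ SimpleGraph.fromEdgeSet {s(fv hn 0, fv hn j)}).Adj
      (fv hn 0) (fv hn j') := by
    rw [SimpleGraph.sdiff_adj, SimpleGraph.fromEdgeSet_adj]
    constructor
    · rw [decode_adj]
      refine ⟨fun h => by rw [h] at hv0; omega, Or.inl ⟨hv0, by rw [hvj']; exact g4⟩⟩
    · rintro ⟨hm, -⟩
      rw [Set.mem_singleton_iff, Sym2.eq_iff] at hm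
      rcases hm with ⟨-, h⟩ | ⟨h, h'⟩
      · rw [← hvj', ← hvj, h] at hne; exact hne rfl
      · rw [h] at hv0; omega
  have hstep2 : ((decode n c) \ SimpleGraph.fromEdgeSet {s(fv hn 0, fv hn j)}).Reachable
      (fv hn j') (fv hn j) := by
    refine chain_adj hn c hc0 (by omega) hblk (by omega) ?_
    intro x y hxy hx1 hy1
    rw [SimpleGraph.sdiff_adj, SimpleGraph.fromEdgeSet_adj]
    refine ⟨hxy, ?_⟩
    rintro ⟨hm, -⟩
    rw [Set.mem_singleton_iff, Sym2.eq_iff] at hm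
    rcases hm with ⟨h, -⟩ | ⟨-, h⟩
    · rw [h, hv0] at hx1; omega
    · rw [h, hv0] at hy1; omega
  exact hstep1.reachable.trans hstep2

include hn in
theorem tree_iff_good (hc0 : c.2 0 = false) :
    (decode n c).IsTree ↔ Good (n-1) c :=
  ⟨good_of_tree hn c hc0, tree_of_good hn c hc0⟩

end Graph

open Classical in
noncomputable def encode (n : ℕ) (H : SimpleGraph (Fin n)) : Cfg :=
  (fun i => if h : 0 < i ∧ i < n then (if H.Adj ⟨0, by omega⟩ ⟨i, h.2⟩ then true else false)
    else false,
   fun i => if h : 0 < i ∧ i + 1 < n then (if H.Adj ⟨i, by omega⟩ ⟨i+1, h.2⟩ then true else false)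
    else false)

lemma supp_encode (n : ℕ) (H : SimpleGraph (Fin n)) : suppC (n-1) (encode n H) := by
  constructor
  · intro k hk
    simp only [encode]
    rw [dif_neg (by omega)]
  · intro k hk
    simp only [encode]
    rw [dif_neg (by omega)]

lemma enc_s_true {n : ℕ} {H : SimpleGraph (Fin n)} {i : ℕ} (h1 : 0 < i) (h2 : i < n) :
    (encode n H).1 i = true ↔ H.Adj ⟨0, by omega⟩ ⟨i, h2⟩ := by
  simp only [encode]
  rw [dif_pos ⟨h1, h2⟩]
  split_ifs with h
  · simpa using h
  · simpa using h

lemma enc_e_true {n : ℕ} {H : SimpleGraph (Fin n)} {i : ℕ} (h1 : 0 < i) (h2 : i + 1 < n) :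
    (encode n H).2 i = true ↔ H.Adj ⟨i, by omega⟩ ⟨i+1, h2⟩ := by
  simp only [encode]
  rw [dif_pos ⟨h1, h2⟩]
  split_ifs with h
  · simpa using h
  · simpa using h

lemma decode_encode {n : ℕ} {H : SimpleGraph (Fin n)} (hH : H ≤ fanGraph n) :
    decode n (encode n H) = H := by
  ext a b
  rw [decode_adj]
  constructor
  · rintro ⟨hne, hrel⟩
    rcases hrel with ⟨h1, h2⟩ | ⟨h1, h2⟩ | ⟨h1, h2⟩ | ⟨h1, h2⟩
    · have hb0 : 0 < (b : ℕ) := by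
        rcases Nat.eq_zero_or_pos (b : ℕ) with h0 | h0
        · exact absurd (Fin.ext (by omega) : a = b) hne
        · exact h0
      have := (enc_s_true hb0 b.isLt).mp h2
      have ha : a = ⟨0, by omega⟩ := Fin.ext h1
      rw [ha]; exact this
    · have ha0 : 0 < (a : ℕ) := by
        by_contra h0
        simp only [encode] at h2
        rw [dif_neg (by omega)] at h2
        exact Bool.false_ne_true h2
      have hbn : (a : ℕ) + 1 < n := by rw [← h1]; exact b.isLt
      have := (enc_e_true ha0 hbn).mp h2
      have hb : b = ⟨(a : ℕ) + 1, hbn⟩ := Fin.ext h1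
      rw [hb]; exact this
    · have ha0 : 0 < (a : ℕ) := by
        rcases Nat.eq_zero_or_pos (a : ℕ) with h0 | h0
        · exact absurd (Fin.ext (by omega) : a = b) hne
        · exact h0
      have := (enc_s_true ha0 a.isLt).mp h2
      have hb : b = ⟨0, by omega⟩ := Fin.ext h1
      rw [hb]; exact this.symm
    · have hb0 : 0 < (b : ℕ) := by
        by_contra h0
        simp only [encode] at h2
        rw [dif_neg (by omega)] at h2
        exact Bool.false_ne_true h2
      have han : (b : ℕ) + 1 < n := by rw [← h1]; exact a.isLt
      have := (enc_e_true hb0 han).mp h2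
      have ha : a = ⟨(b : ℕ) + 1, han⟩ := Fin.ext h1
      rw [ha]; exact this.symm
  · intro hab
    have hf := hH hab
    rw [fanGraph, SimpleGraph.fromRel_adj] at hf
    obtain ⟨hne, hrel⟩ := hf
    refine ⟨hne, ?_⟩
    rcases hrel with (h1 | h1) | (h1 | h1)
    · -- (a:ℕ) = 0
      have hb0 : 0 < (b : ℕ) := by
        rcases Nat.eq_zero_or_pos (b : ℕ) with h0 | h0
        · exact absurd (Fin.ext (by omega) : a = b) hne
        · exact h0
      refine Or.inl ⟨h1, (enc_s_true hb0 b.isLt).mpr ?_⟩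
      have ha : (⟨0, by omega⟩ : Fin n) = a := Fin.ext h1.symm
      rw [ha]; exact hab
    · obtain ⟨ha0, hba⟩ := h1
      have hbn : (a : ℕ) + 1 < n := by rw [← hba]; exact b.isLt
      refine Or.inr (Or.inl ⟨hba, (enc_e_true (by omega) hbn).mpr ?_⟩)
      have hb : (⟨(a : ℕ) + 1, hbn⟩ : Fin n) = b := Fin.ext hba.symm
      rw [hb]; exact hab
    · -- (b:ℕ) = 0
      have ha0 : 0 < (a : ℕ) := by
        rcases Nat.eq_zero_or_pos (a : ℕ) with h0 | h0
        · exact absurd (Fin.ext (by omega) : a = b) hne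
        · exact h0
      refine Or.inr (Or.inr (Or.inl ⟨h1, (enc_s_true ha0 a.isLt).mpr ?_⟩))
      have hb : (⟨0, by omega⟩ : Fin n) = b := Fin.ext h1.symm
      rw [hb]; exact hab.symm
    · obtain ⟨hb0, hba⟩ := h1
      have han : (b : ℕ) + 1 < n := by rw [← hba]; exact a.isLt
      refine Or.inr (Or.inr (Or.inr ⟨hba, (enc_e_true (by omega) han).mpr ?_⟩))
      have ha : (⟨(b : ℕ) + 1, han⟩ : Fin n) = a := Fin.ext hba.symm
      rw [ha]; exact hab.symm

lemma encode_decode {n : ℕ} (hn : 2 ≤ n) {c : Cfg} (hc : suppC (n-1) c) :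
    encode n (decode n c) = c := by
  obtain ⟨hcs, hce⟩ := hc
  refine Prod.ext ?_ ?_ <;> funext i
  · by_cases h : 0 < i ∧ i < n
    · have hiff : (decode n c).Adj ⟨0, by omega⟩ ⟨i, h.2⟩ ↔ c.1 i = true := by
        rw [decode_adj]
        constructor
        · rintro ⟨hne, hrel⟩
          rcases hrel with ⟨h1, h2⟩ | ⟨h1, h2⟩ | ⟨h1, h2⟩ | ⟨h1, h2⟩
          · exact h2
          · simp only [] at h1 h2
            rw [show (0:ℕ) + 1 = 1 from rfl] at h1
            rw [hce 0 (Or.inl rfl)] at h2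
            exact absurd h2 Bool.false_ne_true
          · simp only [] at h1; omega
          · simp only [] at h1; omega
        · intro hs
          refine ⟨fun hq => ?_, Or.inl ⟨rfl, hs⟩⟩
          have := congrArg (fun x : Fin n => (x : ℕ)) hq
          simp only [] at this
          omega
      simp only [encode]
      rw [dif_pos h]
      split_ifs with hadj
      · exact (hiff.mp hadj).symm
      · rcases Bool.eq_false_or_eq_true (c.1 i) with h' | h'
        · exact absurd (hiff.mpr h') hadj
        · exact h'.symm
    · simp only [encode]
      rw [dif_neg h]
      rw [hcs i (by omega)]
  · by_cases h : 0 < i ∧ i + 1 < n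
    · have hiff : (decode n c).Adj ⟨i, by omega⟩ ⟨i+1, h.2⟩ ↔ c.2 i = true := by
        rw [decode_adj]
        constructor
        · rintro ⟨hne, hrel⟩
          rcases hrel with ⟨h1, h2⟩ | ⟨h1, h2⟩ | ⟨h1, h2⟩ | ⟨h1, h2⟩
          · simp only [] at h1; omega
          · exact h2
          · simp only [] at h1; omega
          · simp only [] at h1; omega
        · intro he
          refine ⟨fun hq => ?_, Or.inr (Or.inl ⟨rfl, he⟩)⟩
          have := congrArg (fun x : Fin n => (x : ℕ)) hq
          simp only [] at this
          omega
      simp only [encode]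
      rw [dif_pos h]
      split_ifs with hadj
      · exact (hiff.mp hadj).symm
      · rcases Bool.eq_false_or_eq_true (c.2 i) with h' | h'
        · exact absurd (hiff.mpr h') hadj
        · exact h'.symm
    · simp only [encode]
      rw [dif_neg h]
      rcases Nat.eq_zero_or_pos i with rfl | hi
      · exact (hce 0 (Or.inl rfl)).symm
      · exact (hce i (by omega)).symm

noncomputable def mainEquiv (n : ℕ) (hn : 2 ≤ n) :
    {H : SimpleGraph (Fin n) // H ≤ fanGraph n ∧ H.IsTree} ≃
    {c : Cfg // suppC (n-1) c ∧ Good (n-1) c} where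
  toFun X := ⟨encode n X.1, supp_encode n X.1, by
    have hc0 : (encode n X.1).2 0 = false := (supp_encode n X.1).2 0 (Or.inl rfl)
    refine (tree_iff_good hn _ hc0).mp ?_
    rw [decode_encode X.2.1]
    exact X.2.2⟩
  invFun Y := ⟨decode n Y.1, decode_le_fan Y.1,
    (tree_iff_good hn Y.1 (Y.2.1.2 0 (Or.inl rfl))).mpr Y.2.2⟩
  left_inv X := Subtype.ext (decode_encode X.2.1)
  right_inv Y := Subtype.ext (encode_decode hn Y.2.1)

end FanAux

open goldenRatio in
lemma fib_closed_form (n : ℕ) (hn : 2 ≤ n) :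
    ((Nat.fib (2 * (n - 1)) : ℝ)) =
      2 * (((3 - Real.sqrt 5) / 2) ^ n - ((3 + Real.sqrt 5) / 2) ^ (n - 2)) /
        (5 - 3 * Real.sqrt 5) := by
  obtain ⟨k, rfl⟩ : ∃ k, n = k + 2 := ⟨n - 2, by omega⟩
  have hs : Real.sqrt 5 ^ 2 = 5 := Real.sq_sqrt (by norm_num)
  have hs5 : (1:ℝ) < Real.sqrt 5 := by nlinarith [Real.sqrt_nonneg 5, hs]
  have hphi : ((3 + Real.sqrt 5) / 2) = φ ^ 2 := by rw [Real.goldenRatio]; ring_nf; nlinarith [hs]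
  have hpsi : ((3 - Real.sqrt 5) / 2) = ψ ^ 2 := by rw [Real.goldenConj]; ring_nf; nlinarith [hs]
  have hden : (5 : ℝ) - 3 * Real.sqrt 5 ≠ 0 := by nlinarith [hs]
  have hsne : Real.sqrt 5 ≠ 0 := by positivity
  rw [Real.coe_fib_eq]
  have h2 : k + 2 - 2 = k := by omega
  rw [show 2 * (k + 2 - 1) = 2*k+2 by omega, h2]
  have e1 : φ ^ (2*k+2) = (φ^2)^k * φ^2 := by rw [← pow_mul, ← pow_add]
  have e2 : ψ ^ (2*k+2) = (ψ^2)^k * ψ^2 := by rw [← pow_mul, ← pow_add]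
  have e3 : ((3 - Real.sqrt 5) / 2) ^ (k+2) = (ψ^2)^k * ψ^2 * ψ^2 := by
    rw [hpsi, pow_add]; ring
  rw [e1, e2, e3, hphi]
  set P := (φ^2)^k
  set Q := (ψ^2)^k
  rw [hphi.symm, hpsi.symm]
  field_simp
  linear_combination (-3*P + (3 - Real.sqrt 5)*Q) * hs

theorem fan_tree_count_closed_form (n : ℕ) (hn : 2 ≤ n) :
    (fanTreeCount n : ℝ) =
      2 * (((3 - Real.sqrt 5) / 2) ^ n - ((3 + Real.sqrt 5) / 2) ^ (n - 2)) /
        (5 - 3 * Real.sqrt 5) := by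
  have hm : 1 ≤ n - 1 := by omega
  have h1 : fanTreeCount n = Nat.fib (2 * (n-1)) := by
    rw [fanTreeCount, Nat.card_congr (FanAux.mainEquiv n hn),
      Nat.card_congr (Equiv.subtypeEquivRight
        (fun c => and_congr_right fun _ => FanAux.good_iff_st c (n-1) hm))]
    exact (FanAux.card_st_main (n-1) hm).1
  rw [h1]
  exact fib_closed_form n hn
end
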